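/- arXiv:2307.16612 — 9 statements merged into one kernel-verified Lean document; each statement's English description precedes it below -/
import Mathlib

section
/- For any integers n, k and real α with 0 < α < 1 such that αn is an integer and 0 < k ≤ αn, the ratio of binomial coefficients C(αn, k) / C(n, k) is at most C·√k·α^k for some universal constant C. -/
theorem stmt_0 :
    ∃ C : ℝ, 0 < C ∧ ∀ (n a k : ℕ) (α : ℝ), 0 < α → α < 1 →
      (a : ℝ) = α * n → 0 < k → k ≤ a →
      ((a.choose k : ℝ) / (n.choose k : ℝ)) ≤ C * Real.sqrt k * α ^ k := by
  refine ⟨1, one_pos, fun n a k α hα hα1 ha hk hka => ?_⟩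
  have han : a ≤ n := by
    by_contra h
    push_neg at h
    have : (n : ℝ) < a := by exact_mod_cast h
    nlinarith [Nat.cast_nonneg (α := ℝ) n]
  have hdesc : (a.descFactorial k : ℝ) ≤ α ^ k * (n.descFactorial k : ℝ) := by
    rw [Nat.descFactorial_eq_prod_range, Nat.descFactorial_eq_prod_range]
    push_cast
    rw [show α ^ k = ∏ _i ∈ Finset.range k, α by simp, ← Finset.prod_mul_distrib]
    apply Finset.prod_le_prod
    · intro i hi
      positivity
    · intro i hi
      rw [Finset.mem_range] at hi
      have hia : i + 1 ≤ a := Nat.succ_le_of_lt (lt_of_lt_of_le hi hka)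
      have hin : i ≤ n := le_trans (Nat.le_of_succ_le hia) han
      rw [Nat.cast_sub (Nat.le_of_succ_le hia), Nat.cast_sub hin]
      have : (i : ℝ) * α ≤ i := by nlinarith [Nat.cast_nonneg (α := ℝ) i]
      nlinarith
  have hnck : 0 < (n.choose k : ℝ) := by
    have := Nat.choose_pos (le_trans hka han)
    exact_mod_cast this
  have hratio : (a.choose k : ℝ) / (n.choose k : ℝ) ≤ α ^ k := by
    rw [div_le_iff₀ hnck]
    have hfk : (0:ℝ) < (Nat.factorial k : ℝ) := by exact_mod_cast Nat.factorial_pos k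
    have h1 : ((Nat.factorial k : ℝ)) * (a.choose k : ℝ) ≤ α ^ k * ((Nat.factorial k : ℝ) * (n.choose k : ℝ)) := by
      have e1 : ((Nat.factorial k : ℝ)) * (a.choose k : ℝ) = (a.descFactorial k : ℝ) := by
        rw [Nat.descFactorial_eq_factorial_mul_choose]; push_cast; ring
      have e2 : ((Nat.factorial k : ℝ)) * (n.choose k : ℝ) = (n.descFactorial k : ℝ) := by
        rw [Nat.descFactorial_eq_factorial_mul_choose]; push_cast; ring
      rw [e1, e2]; exact hdesc
    nlinarith
  have hsk : (1:ℝ) ≤ Real.sqrt k := by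
    rw [show (1:ℝ) = Real.sqrt 1 by simp]
    exact Real.sqrt_le_sqrt (by exact_mod_cast hk)
  have : α ^ k ≤ 1 * Real.sqrt k * α ^ k := by
    nlinarith [pow_pos hα k]
  linarith
end

section
/- Let T be an ultrametric represented by a rooted labeled tree on n leaves: each internal node x has label Γ_x > 0, labels are non-increasing from root to leaves, and the distance between two leaves u,v equals Γ_{lca(u,v)}. Then the weight of a minimum spanning tree on the leaf set with this metric equals ∑_{x internal} (deg(x) − 1)·Γ_x, where deg(x) is the number of children of x. -/
open scoped Classical

/-- A finite rooted tree, given by parent pointers: every non-root node has a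
parent, and every node reaches the root by following parents. -/
structure RTree (V : Type*) where
  root : V
  parent : V → Option V
  parent_root : parent root = none
  parent_ne_root : ∀ v, v ≠ root → (parent v).isSome
  reaches_root : ∀ v, Relation.ReflTransGen (fun a b => parent a = some b) v root

/-- The children of a node. -/
noncomputable def RTree.children {V : Type*} [Fintype V] (T : RTree V) (v : V) : Finset V :=
  Finset.univ.filter (fun u => T.parent u = some v)

/-- `T.ancestor x u` : `x` is a (weak) ancestor of `u`. -/
def RTree.ancestor {V : Type*} (T : RTree V) (x u : V) : Prop :=
  Relation.ReflTransGen (fun a b => T.parent a = some b) u x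

/-- The leaves in the subtree rooted at `x`. -/
noncomputable def RTree.leavesBelow {V : Type*} [Fintype V] (T : RTree V) (x : V) : Finset V :=
  Finset.univ.filter (fun u => T.children u = ∅ ∧ T.ancestor x u)

/-- The weight of a minimum spanning tree of the finite space `X` with
distance function `d`. -/
noncomputable def mstWeight (X : Type*) [Fintype X] (d : X → X → ℝ) : ℝ :=
  sInf {w : ℝ | ∃ G : SimpleGraph X, G.IsTree ∧
    w = (∑ p : X × X, if G.Adj p.1 p.2 then d p.1 p.2 else 0) / 2}


/-!
Telescoping along the path to the root gives `Γ y = Γ root - ∑ (Γ (pa x) - Γ x)` over the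
ancestors `x` of `y`. Summed over the edges of a spanning tree `G` of the `n` leaves, the weight
of `G` becomes `(n - 1) Γ root - ∑ₓ (Γ (pa x) - Γ x) eₓ`, where `eₓ` counts the edges of `G`
between leaves below `x`. These leaves span a forest in `G`, so `eₓ ≤ ℓₓ - 1` with `ℓₓ` the
number of leaves below `x`; as `Γ (pa x) - Γ x ≥ 0`, the weight is at least its value at
`eₓ = ℓₓ - 1`, which the same telescoping identifies with `∑ (deg y - 1) Γ y`.

The bound is attained: choose a leaf `rep x` below every node `x` and join `rep y` to `rep c`
for every child `c` of `y` except the one above `rep y`. This is a spanning tree, and its edge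
from `rep y` to `rep c` has weight `Γ y`.
-/

namespace SimpleGraph

open Finset

variable {X : Type*} [Fintype X]

/-- Twice the weight of `G` when `d` is symmetric: every edge is counted in both orientations. -/
noncomputable def dartSum {M : Type*} [AddCommMonoid M] (G : SimpleGraph X) (d : X → X → M) :
    M :=
  ∑ p : X × X, if G.Adj p.1 p.2 then d p.1 p.2 else 0

theorem dartSum_eq_two_nsmul_sum_edgeFinset {M : Type*} [AddCommMonoid M] (G : SimpleGraph X)
    (f : Sym2 X → M) : G.dartSum (fun a b => f s(a, b)) = 2 • ∑ e ∈ G.edgeFinset, f e := by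
  rw [dartSum, ← sum_filter, ← sum_fiberwise_of_maps_to (t := G.edgeFinset)
    (g := fun p => s(p.1, p.2)) (fun p hp => by simpa using hp), smul_sum]
  refine sum_congr rfl fun e he => ?_
  induction e using Sym2.ind with
  | h a b =>
    have hab : G.Adj a b := by simpa using he
    have hfiber : {p ∈ univ.filter (fun p : X × X => G.Adj p.1 p.2) | s(p.1, p.2) = s(a, b)} =
        {(a, b), (b, a)} := by
      ext ⟨u, v⟩
      simp only [mem_filter, mem_univ, true_and, mem_insert, mem_singleton, Sym2.eq_iff,
        Prod.mk.injEq]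
      constructor
      · exact fun h => h.2
      · rintro (h | h) <;> obtain ⟨rfl, rfl⟩ := h
        · exact ⟨hab, Or.inl ⟨rfl, rfl⟩⟩
        · exact ⟨hab.symm, Or.inr ⟨rfl, rfl⟩⟩
    rw [sum_congr rfl fun p hp => by rw [(mem_filter.1 hp).2], sum_const, hfiber,
      card_pair fun h => hab.ne (Prod.ext_iff.1 h).1]

theorem IsAcyclic.card_edgeFinset_add_one_le [Nonempty X] {G : SimpleGraph X}
    [Fintype G.edgeSet] (hG : G.IsAcyclic) : #G.edgeFinset + 1 ≤ Fintype.card X := by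
  classical
  obtain ⟨F, hGF, -, hF⟩ := connected_top.exists_isTree_le_of_le_of_isAcyclic le_top hG
  rw [← hF.card_edgeFinset]
  exact Nat.add_le_add_right (card_le_card (edgeFinset_mono hGF)) 1

theorem IsAcyclic.card_filter_adj_mem_add_two_le [DecidableEq X] {G : SimpleGraph X}
    [DecidableRel G.Adj] (hG : G.IsAcyclic) {W : Finset X} (hW : W.Nonempty) :
    #{p : X × X | G.Adj p.1 p.2 ∧ p.1 ∈ W ∧ p.2 ∈ W} + 2 ≤ 2 * #W := by
  classical
  have : Nonempty (W : Set X) := hW.to_subtype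
  have hcard : #{p : X × X | G.Adj p.1 p.2 ∧ p.1 ∈ W ∧ p.2 ∈ W} =
      #{q : ↥(W : Set X) × ↥(W : Set X) | (G.induce (W : Set X)).Adj q.1 q.2} := by
    refine (card_bij (fun q _ => (q.1.1, q.2.1)) ?_ ?_ ?_).symm
    · intro q hq
      simpa using hq
    · intro q _ q' _ h
      simp only [Prod.mk.injEq] at h
      exact Prod.ext (Subtype.ext h.1) (Subtype.ext h.2)
    · intro p hp
      simp only [mem_filter, mem_univ, true_and] at hp
      exact ⟨(⟨p.1, hp.2.1⟩, ⟨p.2, hp.2.2⟩), by simpa using hp.1, rfl⟩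
  have hforest := (hG.induce (W : Set X)).card_edgeFinset_add_one_le
  have hW : Fintype.card (W : Set X) = #W := by simp
  rw [hcard, ← two_mul_card_edgeFinset]
  omega

end SimpleGraph

namespace RTree

open Finset

variable {V : Type*} (T : RTree V)

theorem ancestor_refl (x : V) : T.ancestor x x := Relation.ReflTransGen.refl

theorem ancestor_trans {x y z : V} (hxy : T.ancestor x y) (hyz : T.ancestor y z) :
    T.ancestor x z :=
  hyz.trans hxy

theorem ancestor_root (x : V) : T.ancestor T.root x := T.reaches_root x

theorem ancestor_of_parent_eq {c x : V} (h : T.parent c = some x) : T.ancestor x c :=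
  Relation.ReflTransGen.single h

theorem ancestor_total {x y u : V} (hx : T.ancestor x u) (hy : T.ancestor y u) :
    T.ancestor x y ∨ T.ancestor y x :=
  (Relation.ReflTransGen.total_of_right_unique
    (fun _ _ _ h h' => Option.some_injective _ (h.symm.trans h')) hx hy).symm

theorem eq_root_of_ancestor_root {x : V} (h : T.ancestor x T.root) : x = T.root := by
  rcases Relation.ReflTransGen.cases_head_iff.1 h with h | ⟨c, hc, -⟩
  · exact h.symm
  · simp [T.parent_root] at hc

theorem exists_parent_eq_of_ancestor {z w : V} (h : T.ancestor z w) (hne : z ≠ w) :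
    ∃ d, T.parent d = some z ∧ T.ancestor d w := by
  rcases Relation.ReflTransGen.cases_tail_iff _ _ _ |>.1 h with h | ⟨d, hwd, hdz⟩
  · exact absurd h hne
  · exact ⟨d, hdz, hwd⟩

theorem ancestor_of_ancestor_of_parent_eq {z w p : V} (h : T.ancestor z w) (hne : z ≠ w)
    (hp : T.parent w = some p) : T.ancestor z p := by
  rcases Relation.ReflTransGen.cases_head_iff.1 h with h | ⟨q, hq, hqz⟩
  · exact absurd h.symm hne
  · rwa [Option.some_injective _ (hp.symm.trans hq)]

/-- Following parents from a node on a cycle never leaves the cycle, so the root would lie on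
it, although the root has no parent. -/
theorem not_ancestor_of_parent_eq {c x : V} (h : T.parent c = some x) : ¬ T.ancestor c x := by
  intro hxc
  have hcycle : Relation.TransGen (fun a b => T.parent a = some b) c c :=
    Relation.TransGen.head' h hxc
  have hback : ∀ w, T.ancestor w c → T.ancestor c w := by
    intro w hcw
    induction hcw with
    | refl => exact T.ancestor_refl c
    | tail _ hww' ih =>
      obtain ⟨d, hwd, hdc⟩ :=
        Relation.TransGen.head'_iff.1 (Relation.TransGen.trans_right ih hcycle)
      rwa [Option.some_injective _ (hww'.symm.trans hwd)]
  have hroot := T.eq_root_of_ancestor_root (hback _ (T.ancestor_root c))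
  simp [hroot, T.parent_root] at h

theorem ancestor_antisymm {a b : V} (hab : T.ancestor a b) (hba : T.ancestor b a) : a = b := by
  by_contra hne
  obtain ⟨d, hd, hdb⟩ := T.exists_parent_eq_of_ancestor hab hne
  exact T.not_ancestor_of_parent_eq hd (T.ancestor_trans hdb hba)

theorem eq_of_forall_ancestor_iff {a b : V} (h : ∀ w, T.ancestor w a ↔ T.ancestor w b) :
    a = b :=
  T.ancestor_antisymm ((h a).1 (T.ancestor_refl a)) ((h b).2 (T.ancestor_refl b))

theorem eq_of_parent_eq_of_ancestor {c c' y u : V} (hc : T.parent c = some y)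
    (hc' : T.parent c' = some y) (hu : T.ancestor c u) (hu' : T.ancestor c' u) : c = c' := by
  by_contra hne
  rcases T.ancestor_total hu hu' with h | h
  · exact T.not_ancestor_of_parent_eq hc (T.ancestor_of_ancestor_of_parent_eq h hne hc')
  · exact T.not_ancestor_of_parent_eq hc'
      (T.ancestor_of_ancestor_of_parent_eq h (Ne.symm hne) hc)

/-- The parent of `x`; the root is its own parent. -/
def pa (x : V) : V := (T.parent x).getD T.root

theorem pa_root : T.pa T.root = T.root := by simp [pa, T.parent_root]

theorem pa_eq_of_parent_eq {c x : V} (h : T.parent c = some x) : T.pa c = x := by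
  simp [pa, h]

theorem parent_eq_some_pa {x : V} (hx : x ≠ T.root) : T.parent x = some (T.pa x) := by
  obtain ⟨y, hy⟩ := Option.isSome_iff_exists.1 (T.parent_ne_root x hx)
  rw [hy, T.pa_eq_of_parent_eq hy]

noncomputable def descendants [Fintype V] (x : V) : Finset V := {y | T.ancestor x y}

theorem mem_descendants [Fintype V] {x y : V} : y ∈ T.descendants x ↔ T.ancestor x y := by
  simp [descendants]

theorem card_descendants_lt [Fintype V] {c x : V} (h : T.parent c = some x) :
    #(T.descendants c) < #(T.descendants x) := by
  refine card_lt_card ((ssubset_iff_of_subset fun y hy => ?_).2 ⟨x, ?_, ?_⟩) <;>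
    simp only [mem_descendants] at *
  · exact T.ancestor_trans (T.ancestor_of_parent_eq h) hy
  · exact T.ancestor_refl x
  · exact T.not_ancestor_of_parent_eq h

theorem induction [Fintype V] {motive : V → Prop}
    (ih : ∀ x, (∀ c, T.parent c = some x → motive c) → motive x) (x : V) : motive x :=
  ih x fun c _ => induction ih c
termination_by #(T.descendants x)
decreasing_by exact T.card_descendants_lt ‹_›

theorem apply_eq_sub_sum_ancestors {R : Type*} [CommRing R] [Fintype V] (Γ : V → R) (y : V) :
    Γ y = Γ T.root - ∑ x ∈ univ.filter (T.ancestor · y), (Γ (T.pa x) - Γ x) := by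
  induction T.ancestor_root y using Relation.ReflTransGen.head_induction_on with
  | refl =>
    have : univ.filter (T.ancestor · T.root) = {T.root} := by
      ext x
      simpa using ⟨T.eq_root_of_ancestor_root, fun h => h ▸ T.ancestor_refl _⟩
    simp [this, T.pa_root]
  | @head a c hac _ ih =>
    have hancestors : univ.filter (T.ancestor · a) =
        insert a (univ.filter (T.ancestor · c)) := by
      ext x
      simp only [mem_filter, mem_univ, true_and, mem_insert]
      refine ⟨fun h => ?_, ?_⟩
      · rcases Relation.ReflTransGen.cases_head_iff.1 h with h | ⟨q, hq, hqx⟩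
        · exact Or.inl h.symm
        · exact Or.inr (by rwa [Option.some_injective _ (hac.symm.trans hq)])
      · rintro (rfl | h)
        · exact T.ancestor_refl x
        · exact T.ancestor_trans h (T.ancestor_of_parent_eq hac)
    rw [hancestors, sum_insert (by simpa using T.not_ancestor_of_parent_eq hac),
      T.pa_eq_of_parent_eq hac]
    linear_combination ih

theorem sum_comp_eq_sub_sum_card_ancestor {R ι : Type*} [CommRing R] [Fintype V] (Γ : V → R)
    (s : Finset ι) (f : ι → V) :
    ∑ i ∈ s, Γ (f i) =
      #s * Γ T.root - ∑ x, (Γ (T.pa x) - Γ x) * #{i ∈ s | T.ancestor x (f i)} := by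
  rw [sum_congr rfl fun i _ => T.apply_eq_sub_sum_ancestors Γ (f i), sum_sub_distrib, sum_const,
    nsmul_eq_mul, sum_comm' (t' := univ) (s' := fun x => {i ∈ s | T.ancestor x (f i)})
    (by simp)]
  congr 1
  exact sum_congr rfl fun x _ => by rw [sum_const, nsmul_eq_mul, mul_comm]

section Finite

variable [Fintype V]

theorem mem_children {c x : V} : c ∈ T.children x ↔ T.parent c = some x := by
  simp [RTree.children]

abbrev Leaf : Type _ := {v : V // T.children v = ∅}

theorem exists_leaf_ancestor (x : V) : ∃ u, T.children u = ∅ ∧ T.ancestor x u := by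
  induction x using T.induction with
  | ih x ih =>
    by_cases hx : T.children x = ∅
    · exact ⟨x, hx, T.ancestor_refl x⟩
    · obtain ⟨c, hc⟩ := nonempty_iff_ne_empty.2 hx
      have hc := (T.mem_children).1 hc
      obtain ⟨u, hu, hcu⟩ := ih c hc
      exact ⟨u, hu, T.ancestor_trans (T.ancestor_of_parent_eq hc) hcu⟩

noncomputable def rep (x : V) : T.Leaf :=
  ⟨(T.exists_leaf_ancestor x).choose, (T.exists_leaf_ancestor x).choose_spec.1⟩

theorem ancestor_rep (x : V) : T.ancestor x (T.rep x) :=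
  (T.exists_leaf_ancestor x).choose_spec.2

theorem eq_of_ancestor_leaf {x : V} (hx : T.children x = ∅) {u : V} (h : T.ancestor x u) :
    x = u := by
  by_contra hne
  obtain ⟨d, hd, -⟩ := T.exists_parent_eq_of_ancestor h hne
  simpa [hx] using (T.mem_children).2 hd

theorem rep_leaf (u : T.Leaf) : T.rep u = u :=
  Subtype.ext (T.eq_of_ancestor_leaf u.2 (T.ancestor_rep u)).symm

theorem existsUnique_child_ancestor_rep {y : V} (hy : T.children y ≠ ∅) :
    ∃! c, c ∈ T.children y ∧ T.ancestor c (T.rep y) := by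
  have hne : y ≠ T.rep y := fun h => hy (h ▸ (T.rep y).2)
  obtain ⟨d, hd, hdr⟩ := T.exists_parent_eq_of_ancestor (T.ancestor_rep y) hne
  refine ⟨d, ⟨(T.mem_children).2 hd, hdr⟩, fun c ⟨hc, hcr⟩ => ?_⟩
  exact T.eq_of_parent_eq_of_ancestor ((T.mem_children).1 hc) hd hcr hdr

/-- A non-root node `c` is *principal* if the leaf `rep (pa c)` lies below it. Every internal
node has exactly one principal child, and the non-principal nodes `c` index the edges
`s(rep (pa c), rep c)` of `leafTree`. -/
noncomputable def nonprincipal : Finset V :=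
  {c | c ≠ T.root ∧ ¬ T.ancestor c (T.rep (T.pa c))}

theorem ne_root_of_mem_nonprincipal {c : V} (hc : c ∈ T.nonprincipal) : c ≠ T.root :=
  (mem_filter.1 hc).2.1

theorem mem_nonprincipal_iff_of_parent_eq {c y : V} (h : T.parent c = some y) :
    c ∈ T.nonprincipal ↔ ¬ T.ancestor c (T.rep y) := by
  have hc : c ≠ T.root := by rintro rfl; simp [T.parent_root] at h
  simp [nonprincipal, hc, T.pa_eq_of_parent_eq h]

theorem card_children_filter_nonprincipal_add_one {y : V} (hy : T.children y ≠ ∅) :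
    #{c ∈ T.children y | c ∈ T.nonprincipal} + 1 = #(T.children y) := by
  have hprincipal : #{c ∈ T.children y | T.ancestor c (T.rep y)} = 1 := by
    obtain ⟨d, hd, hdu⟩ := T.existsUnique_child_ancestor_rep hy
    exact card_eq_one.2 ⟨d, by ext c; simpa using ⟨fun h => hdu c h, fun h => h ▸ hd⟩⟩
  have hnonprincipal : {c ∈ T.children y | c ∈ T.nonprincipal} =
      {c ∈ T.children y | ¬ T.ancestor c (T.rep y)} :=
    filter_congr fun c hc => T.mem_nonprincipal_iff_of_parent_eq ((T.mem_children).1 hc)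
  rw [hnonprincipal, ← hprincipal, add_comm, card_filter_add_card_filter_not]

theorem filter_pa_eq {s : Finset V} (hs : ∀ c ∈ s, c ≠ T.root) (y : V) :
    {c ∈ s | T.pa c = y} = {c ∈ T.children y | c ∈ s} := by
  ext c
  simp only [mem_filter, mem_univ, RTree.children, true_and]
  constructor
  · rintro ⟨hc, rfl⟩
    exact ⟨T.parent_eq_some_pa (hs c hc), hc⟩
  · rintro ⟨hp, hc⟩
    exact ⟨hc, T.pa_eq_of_parent_eq hp⟩

theorem sum_internal_eq_sum_nonprincipal {R : Type*} [CommRing R] (Γ : V → R) :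
    ∑ v ∈ univ.filter (fun v : V => T.children v ≠ ∅), ((#(T.children v) : R) - 1) * Γ v =
      ∑ c ∈ T.nonprincipal, Γ (T.pa c) := by
  rw [← sum_fiberwise_of_maps_to (s := T.nonprincipal) (g := T.pa) (t := univ)
    (fun _ _ => mem_univ _), sum_filter]
  refine sum_congr rfl fun y _ => ?_
  rw [sum_congr rfl fun c hc => by rw [(mem_filter.1 hc).2], sum_const, nsmul_eq_mul,
    T.filter_pa_eq (fun _ => T.ne_root_of_mem_nonprincipal) y]
  split_ifs with hy
  · rw [← T.card_children_filter_nonprincipal_add_one hy]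
    push_cast
    ring
  · simp [not_not.1 hy]

theorem card_eq_sum_card_children_filter {s t : Finset V}
    (hs : ∀ c ∈ s, c ≠ T.root ∧ T.pa c ∈ t) : #s = ∑ y ∈ t, #{c ∈ T.children y | c ∈ s} := by
  rw [card_eq_sum_card_fiberwise fun c hc => (hs c hc).2]
  exact sum_congr rfl fun y _ => by rw [T.filter_pa_eq fun c hc => (hs c hc).1]

theorem card_descendants_eq_sum_card_children_add_one (x : V) :
    #(T.descendants x) = ∑ y ∈ T.descendants x, #(T.children y) + 1 := by
  rw [← card_erase_add_one ((T.mem_descendants).2 (T.ancestor_refl x)),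
    T.card_eq_sum_card_children_filter (t := T.descendants x)]
  · refine congrArg (· + 1) (sum_congr rfl fun y hy => congrArg card
      (filter_true_of_mem fun c hc => ?_))
    have hc := (T.mem_children).1 hc
    have hxy := (T.mem_descendants).1 hy
    refine mem_erase.2
      ⟨?_, (T.mem_descendants).2 (T.ancestor_trans hxy (T.ancestor_of_parent_eq hc))⟩
    rintro rfl
    exact T.not_ancestor_of_parent_eq hc hxy
  · intro c hc
    obtain ⟨hcx, hxc⟩ := mem_erase.1 hc
    have hxc := (T.mem_descendants).1 hxc
    have hroot : c ≠ T.root := by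
      rintro rfl
      exact hcx (T.eq_root_of_ancestor_root hxc).symm
    exact ⟨hroot, (T.mem_descendants).2
      (T.ancestor_of_ancestor_of_parent_eq hxc (Ne.symm hcx) (T.parent_eq_some_pa hroot))⟩

theorem card_leaf_filter_ancestor (x : V) :
    #{u : T.Leaf | T.ancestor x u} = #{y ∈ T.descendants x | T.children y = ∅} := by
  rw [← card_subtype _ (T.descendants x)]
  refine congrArg card (ext fun u => ?_)
  simp [descendants]

theorem card_nonprincipal_filter_add_one (x : V) :
    #{c ∈ T.nonprincipal | T.ancestor x (T.pa c)} + 1 = #{u : T.Leaf | T.ancestor x u} := by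
  let D := T.descendants x
  have hnonprincipal : #{c ∈ T.nonprincipal | T.ancestor x (T.pa c)} =
      ∑ y ∈ D, #{c ∈ T.children y | c ∈ T.nonprincipal} := by
    rw [T.card_eq_sum_card_children_filter (t := D)]
    · refine sum_congr rfl fun y hy => congrArg card (filter_congr fun c hc => ?_)
      rw [mem_filter, T.pa_eq_of_parent_eq ((T.mem_children).1 hc)]
      simp [(T.mem_descendants).1 hy]
    · intro c hc
      obtain ⟨hc, hxc⟩ := mem_filter.1 hc
      exact ⟨T.ne_root_of_mem_nonprincipal hc, (T.mem_descendants).2 hxc⟩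
  have hchildren : ∑ y ∈ D, #(T.children y) =
      ∑ y ∈ D, #{c ∈ T.children y | c ∈ T.nonprincipal} + #{y ∈ D | T.children y ≠ ∅} := by
    rw [card_eq_sum_ones, sum_filter, ← sum_add_distrib]
    refine sum_congr rfl fun y _ => ?_
    split_ifs with hy
    · exact (T.card_children_filter_nonprincipal_add_one hy).symm
    · simp [not_not.1 hy]
  have hleaves := card_filter_add_card_filter_not (s := D) (T.children · = ∅)
  have hdescendants := T.card_descendants_eq_sum_card_children_add_one x
  rw [T.card_leaf_filter_ancestor]
  simp only [D, ne_eq] at *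
  omega

theorem card_leaf_eq_card_nonprincipal_add_one : Fintype.card T.Leaf = #T.nonprincipal + 1 := by
  have h := T.card_nonprincipal_filter_add_one T.root
  rwa [filter_true_of_mem fun c _ => T.ancestor_root _,
    filter_true_of_mem fun u _ => T.ancestor_root _, card_univ, eq_comm] at h

theorem ancestor_rep_pa_and_ancestor_rep_iff {c : V} (hc : c ∈ T.nonprincipal) (w : V) :
    T.ancestor w (T.rep (T.pa c)) ∧ T.ancestor w (T.rep c) ↔ T.ancestor w (T.pa c) := by
  have hnot : ¬ T.ancestor c (T.rep (T.pa c)) := (mem_filter.1 hc).2.2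
  have hpc := T.parent_eq_some_pa (T.ne_root_of_mem_nonprincipal hc)
  constructor
  · rintro ⟨hw, hwc⟩
    rcases T.ancestor_total hwc (T.ancestor_rep c) with h | h
    · refine T.ancestor_of_ancestor_of_parent_eq h ?_ hpc
      rintro rfl
      exact hnot hw
    · exact absurd (T.ancestor_trans h hw) hnot
  · intro h
    exact ⟨T.ancestor_trans h (T.ancestor_rep _), T.ancestor_trans h
      (T.ancestor_trans (T.ancestor_of_parent_eq hpc) (T.ancestor_rep c))⟩

noncomputable def leafEdge (c : V) : Sym2 T.Leaf := s(T.rep (T.pa c), T.rep c)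

theorem rep_pa_ne_rep {c : V} (hc : c ∈ T.nonprincipal) : T.rep (T.pa c) ≠ T.rep c := by
  intro h
  exact (mem_filter.1 hc).2.2 (h ▸ T.ancestor_rep c)

theorem leafEdge_injOn : Set.InjOn T.leafEdge T.nonprincipal := by
  intro c hc c' hc' h
  have hpa : T.pa c = T.pa c' := T.eq_of_forall_ancestor_iff fun w => by
    rw [← T.ancestor_rep_pa_and_ancestor_rep_iff hc, ← T.ancestor_rep_pa_and_ancestor_rep_iff hc']
    rcases Sym2.eq_iff.1 h with ⟨h1, h2⟩ | ⟨h1, h2⟩ <;> rw [h1, h2]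
    exact and_comm
  rcases Sym2.eq_iff.1 h with ⟨-, h⟩ | ⟨-, h⟩
  · exact T.eq_of_parent_eq_of_ancestor (T.parent_eq_some_pa (T.ne_root_of_mem_nonprincipal hc))
      (hpa ▸ T.parent_eq_some_pa (T.ne_root_of_mem_nonprincipal hc')) (T.ancestor_rep c)
      (h ▸ T.ancestor_rep c')
  · exact absurd (hpa ▸ h).symm (T.rep_pa_ne_rep hc)

noncomputable def leafTree : SimpleGraph T.Leaf :=
  SimpleGraph.fromEdgeSet (T.nonprincipal.image T.leafEdge : Set (Sym2 T.Leaf))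

theorem edgeFinset_leafTree : T.leafTree.edgeFinset = T.nonprincipal.image T.leafEdge := by
  ext e
  rw [SimpleGraph.mem_edgeFinset, leafTree, SimpleGraph.edgeSet_fromEdgeSet, Set.mem_sdiff,
    mem_coe, and_iff_left_iff_imp, mem_image]
  rintro ⟨c, hc, rfl⟩
  exact Sym2.mk_isDiag_iff.not.2 (T.rep_pa_ne_rep hc)

theorem leafTree_adj {c : V} (hc : c ∈ T.nonprincipal) :
    T.leafTree.Adj (T.rep (T.pa c)) (T.rep c) :=
  (SimpleGraph.fromEdgeSet_adj _).2 ⟨mem_coe.2 (mem_image_of_mem _ hc), T.rep_pa_ne_rep hc⟩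

theorem leafTree_reachable_rep (x : V) (u : T.Leaf) (hu : T.ancestor x u) :
    T.leafTree.Reachable (T.rep x) u := by
  induction x using T.induction generalizing u with
  | ih x ih =>
    by_cases hxu : x = u
    · subst hxu
      rw [T.rep_leaf u]
    · obtain ⟨c, hc, hcu⟩ := T.exists_parent_eq_of_ancestor hu hxu
      refine SimpleGraph.Reachable.trans ?_ (ih c hc u hcu)
      by_cases hprincipal : T.ancestor c (T.rep x)
      · exact (ih c hc _ hprincipal).symm
      · have hadj := T.leafTree_adj ((T.mem_nonprincipal_iff_of_parent_eq hc).2 hprincipal)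
        rw [T.pa_eq_of_parent_eq hc] at hadj
        exact hadj.reachable

theorem isTree_leafTree [Nonempty T.Leaf] : T.leafTree.IsTree := by
  refine SimpleGraph.isTree_iff_connected_and_card.2 ⟨?_, ?_⟩
  · refine (SimpleGraph.connected_iff _).2 ⟨fun u v => ?_, inferInstance⟩
    exact (T.leafTree_reachable_rep T.root u (T.ancestor_root u)).symm.trans
      (T.leafTree_reachable_rep T.root v (T.ancestor_root v))
  · rw [Nat.card_eq_fintype_card, ← SimpleGraph.edgeFinset_card, T.edgeFinset_leafTree,
      card_image_of_injOn T.leafEdge_injOn, Nat.card_eq_fintype_card,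
      T.card_leaf_eq_card_nonprincipal_add_one]

theorem dartSum_leafTree {R : Type*} [CommRing R] {lca : V → V → V}
    (hlca : ∀ x u v, T.ancestor x (lca u v) ↔ T.ancestor x u ∧ T.ancestor x v) (Γ : V → R) :
    T.leafTree.dartSum (fun u v => Γ (lca u v)) = 2 * ∑ c ∈ T.nonprincipal, Γ (T.pa c) := by
  have hcomm : ∀ u v, lca u v = lca v u := fun u v =>
    T.eq_of_forall_ancestor_iff fun w => by rw [hlca, hlca, and_comm]
  have hdarts := T.leafTree.dartSum_eq_two_nsmul_sum_edgeFinset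
    (Sym2.lift ⟨fun u v : T.Leaf => Γ (lca u v), fun u v => congrArg Γ (hcomm u v)⟩)
  simp only [Sym2.lift_mk] at hdarts
  rw [hdarts, T.edgeFinset_leafTree, sum_image T.leafEdge_injOn, nsmul_eq_mul, Nat.cast_ofNat]
  refine congrArg (2 * ·) (sum_congr rfl fun c hc => ?_)
  simp only [leafEdge, Sym2.lift_mk]
  exact congrArg Γ
    (T.eq_of_forall_ancestor_iff fun w => by rw [hlca, T.ancestor_rep_pa_and_ancestor_rep_iff hc])

theorem card_filter_adj_ancestor_lca_le {lca : V → V → V}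
    (hlca : ∀ x u v, T.ancestor x (lca u v) ↔ T.ancestor x u ∧ T.ancestor x v)
    {G : SimpleGraph T.Leaf} (hG : G.IsAcyclic) (x : V) :
    #{p : T.Leaf × T.Leaf | G.Adj p.1 p.2 ∧ T.ancestor x (lca p.1 p.2)} ≤
      2 * #{c ∈ T.nonprincipal | T.ancestor x (T.pa c)} := by
  have hcard := T.card_nonprincipal_filter_add_one x
  set W : Finset T.Leaf := {u | T.ancestor x u}
  have hforest := hG.card_filter_adj_mem_add_two_le (W := W)
    ⟨T.rep x, by simpa [W] using T.ancestor_rep x⟩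
  have hpairs : #{p : T.Leaf × T.Leaf | G.Adj p.1 p.2 ∧ T.ancestor x (lca p.1 p.2)} =
      #{p : T.Leaf × T.Leaf | G.Adj p.1 p.2 ∧ p.1 ∈ W ∧ p.2 ∈ W} :=
    congrArg card (ext fun p => by simp [W, hlca])
  rw [hpairs]
  omega

theorem two_mul_sum_nonprincipal_le_dartSum {lca : V → V → V}
    (hlca : ∀ x u v, T.ancestor x (lca u v) ↔ T.ancestor x u ∧ T.ancestor x v) {Γ : V → ℝ}
    (hmono : ∀ u v, T.parent u = some v → Γ u ≤ Γ v) {G : SimpleGraph T.Leaf} (hG : G.IsTree) :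
    2 * ∑ c ∈ T.nonprincipal, Γ (T.pa c) ≤ G.dartSum (fun u v => Γ (lca u v)) := by
  set P := univ.filter fun p : T.Leaf × T.Leaf => G.Adj p.1 p.2
  have hP : #P = 2 * #T.nonprincipal := by
    have hedges := hG.card_edgeFinset
    rw [T.card_leaf_eq_card_nonprincipal_add_one] at hedges
    have h2 : 2 * #G.edgeFinset = #P := G.two_mul_card_edgeFinset
    omega
  have hδ : ∀ x, 0 ≤ Γ (T.pa x) - Γ x := fun x => by
    by_cases hx : x = T.root
    · simp [hx, T.pa_root]
    · linarith [hmono x _ (T.parent_eq_some_pa hx)]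
  rw [SimpleGraph.dartSum, ← sum_filter, T.sum_comp_eq_sub_sum_card_ancestor Γ P,
    T.sum_comp_eq_sub_sum_card_ancestor Γ T.nonprincipal, hP, mul_sub, mul_sum]
  have hcount : ∑ x, (Γ (T.pa x) - Γ x) * (#{p ∈ P | T.ancestor x (lca p.1 p.2)} : ℝ) ≤
      ∑ x, 2 * ((Γ (T.pa x) - Γ x) * #{c ∈ T.nonprincipal | T.ancestor x (T.pa c)}) :=
    sum_le_sum fun x _ => by
      rw [mul_left_comm, filter_filter]
      exact mul_le_mul_of_nonneg_left
        (by exact_mod_cast T.card_filter_adj_ancestor_lca_le hlca hG.isAcyclic x) (hδ x)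
  push_cast
  linarith

end Finite

end RTree

theorem stmt_2_general {V : Type*} [Fintype V] (T : RTree V) (Γ : V → ℝ) (lca : V → V → V)
    (hmono : ∀ u v, T.parent u = some v → Γ u ≤ Γ v)
    (hlca1 : ∀ u v, T.ancestor (lca u v) u)
    (hlca2 : ∀ u v, T.ancestor (lca u v) v)
    (hlca3 : ∀ u v w, T.ancestor w u → T.ancestor w v → T.ancestor w (lca u v))
    [Nonempty {v : V // T.children v = ∅}] :
    mstWeight {v : V // T.children v = ∅} (fun u v => Γ (lca u.1 v.1)) =
      ∑ v ∈ Finset.univ.filter (fun v : V => T.children v ≠ ∅),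
        (((T.children v).card : ℝ) - 1) * Γ v := by
  have hlca : ∀ x u v, T.ancestor x (lca u v) ↔ T.ancestor x u ∧ T.ancestor x v := fun x u v =>
    ⟨fun h => ⟨T.ancestor_trans h (hlca1 u v), T.ancestor_trans h (hlca2 u v)⟩,
      fun h => hlca3 u v x h.1 h.2⟩
  rw [T.sum_internal_eq_sum_nonprincipal]
  refine IsLeast.csInf_eq ⟨⟨T.leafTree, T.isTree_leafTree, ?_⟩, ?_⟩
  · change _ = T.leafTree.dartSum (fun u v => Γ (lca u v)) / 2
    rw [T.dartSum_leafTree hlca]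
    ring
  · rintro w ⟨G, hG, rfl⟩
    have hlower := T.two_mul_sum_nonprincipal_le_dartSum hlca hmono hG
    change _ ≤ G.dartSum (fun u v => Γ (lca u v)) / 2
    linarith

/-- For an ultrametric given by a rooted labeled tree (labels positive on internal
nodes, zero exactly on leaves, non-increasing from root to leaves, and the
distance between leaves `u, v` being `Γ (lca u v)`), the weight of a minimum
spanning tree on the leaves equals `∑_{x internal} (deg x − 1)·Γ x`. -/
theorem stmt_2 {V : Type*} [Fintype V] (T : RTree V) (Γ : V → ℝ) (lca : V → V → V)
    (hleaf : ∀ v, Γ v = 0 ↔ T.children v = ∅)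
    (hpos : ∀ v, T.children v ≠ ∅ → 0 < Γ v)
    (hmono : ∀ u v, T.parent u = some v → Γ u ≤ Γ v)
    (hlca1 : ∀ u v, T.ancestor (lca u v) u)
    (hlca2 : ∀ u v, T.ancestor (lca u v) v)
    (hlca3 : ∀ u v w, T.ancestor w u → T.ancestor w v → T.ancestor w (lca u v))
    [Nonempty {v : V // T.children v = ∅}] :
    mstWeight {v : V // T.children v = ∅} (fun u v => Γ (lca u.1 v.1)) =
      ∑ v ∈ Finset.univ.filter (fun v : V => T.children v ≠ ∅),
        (((T.children v).card : ℝ) - 1) * Γ v :=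
  stmt_2_general T Γ lca hmono hlca1 hlca2 hlca3
end

section
/- Let N be a Δ-net of a finite metric space (X, d) with |X| ≥ 2. Then |N| ≤ ⌈(2/Δ)·w(MST(X))⌉, where w(MST(X)) is the weight of a minimum spanning tree of X. -/
/-!
A net point `u` carries the tent function `max (Δ/2 - dist · u) 0`, which equals `Δ/2` at `u`
and vanishes at every other net point. Going along the tree path from `u` to another net point
and back, the tent changes by `Δ/2` each way, so its total variation over the darts of a
spanning tree `T` is at least `Δ`. On the other hand the open `Δ/2`-balls around net points are
disjoint, so across a single edge `xy` the variations of all tents add up to at most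
`dist x y`. Summing over the net gives `|N| · Δ ≤ 2 w(T)` as soon as `|N| ≥ 2`; for `|N| = 1`
it suffices that a tree on at least two points has positive weight.
-/

open scoped Classical

open Finset

section Tent

variable {α : Type*} [PseudoMetricSpace α]

noncomputable def tent (u : α) (r : ℝ) (z : α) : ℝ := max (r - dist z u) 0

variable {u : α} {r : ℝ}

theorem tent_self (hr : 0 ≤ r) : tent u r u = r := by
  simp [tent, hr]

theorem tent_eq_zero {z : α} (h : r ≤ dist z u) : tent u r z = 0 :=
  max_eq_right (sub_nonpos.2 h)

theorem tent_eq_of_lt {z : α} (h : dist z u < r) : tent u r z = r - dist z u :=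
  max_eq_left (sub_nonneg.2 h.le)

theorem abs_tent_sub_tent_le (x y : α) : |tent u r x - tent u r y| ≤ dist x y :=
  calc |tent u r x - tent u r y| ≤ |(r - dist x u) - (r - dist y u)| :=
        abs_max_sub_max_le_abs _ _ _
    _ = |dist y u - dist x u| := by rw [sub_sub_sub_cancel_left]
    _ ≤ dist y x := abs_dist_sub_le y x u
    _ = dist x y := dist_comm y x

theorem Set.Pairwise.eq_of_dist_lt {N : Set α} (hN : N.Pairwise fun u v => 2 * r ≤ dist u v)
    {u v z : α} (hu : u ∈ N) (hv : v ∈ N) (hzu : dist z u < r) (hzv : dist z v < r) :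
    u = v := by
  by_contra huv
  linarith [hN hu hv huv, dist_triangle_left u v z]

theorem abs_tent_sub_tent_eq_zero {x y : α} (hx : r ≤ dist x u) (hy : r ≤ dist y u) :
    |tent u r x - tent u r y| = 0 := by
  rw [tent_eq_zero hx, tent_eq_zero hy, sub_self, abs_zero]

variable {N : Finset α}

theorem sum_abs_tent_sub_tent_le_of_ne (hN : (N : Set α).Pairwise fun u v => 2 * r ≤ dist u v)
    {a c x y : α} (ha : a ∈ N) (hc : c ∈ N) (hac : a ≠ c)
    (hxa : dist x a < r) (hyc : dist y c < r) :
    ∑ u ∈ N, |tent u r x - tent u r y| ≤ dist x y := by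
  have hya : r ≤ dist y a := le_of_not_gt fun hya => hac (hN.eq_of_dist_lt ha hc hya hyc)
  have hxc : r ≤ dist x c := le_of_not_gt fun hxc => hac (hN.eq_of_dist_lt ha hc hxa hxc)
  rw [← sum_subset (insert_subset ha (singleton_subset_iff.2 hc)), sum_pair hac,
    tent_eq_of_lt hxa, tent_eq_zero hya, tent_eq_zero hxc, tent_eq_of_lt hyc]
  · rw [sub_zero, zero_sub, abs_neg, abs_of_nonneg (by linarith), abs_of_nonneg (by linarith)]
    linarith [hN ha hc hac, dist_triangle4 a x y c, dist_comm a x]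
  · intro u hu hu'
    simp only [mem_insert, mem_singleton, not_or] at hu'
    exact abs_tent_sub_tent_eq_zero
      (le_of_not_gt fun hxu => hu'.1 (hN.eq_of_dist_lt hu ha hxu hxa))
      (le_of_not_gt fun hyu => hu'.2 (hN.eq_of_dist_lt hu hc hyu hyc))

theorem sum_abs_tent_sub_tent_le (hN : (N : Set α).Pairwise fun u v => 2 * r ≤ dist u v)
    (x y : α) : ∑ u ∈ N, |tent u r x - tent u r y| ≤ dist x y := by
  by_cases hsplit : ∃ a ∈ N, ∃ c ∈ N, a ≠ c ∧ dist x a < r ∧ dist y c < r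
  · obtain ⟨a, ha, c, hc, hac, hxa, hyc⟩ := hsplit
    exact sum_abs_tent_sub_tent_le_of_ne hN ha hc hac hxa hyc
  push Not at hsplit
  set S := N.filter fun u => dist x u < r ∨ dist y u < r
  have hS : S.card ≤ 1 := card_le_one.2 fun u hu v hv => by
    simp only [S, mem_filter] at hu hv
    by_contra huv
    rcases hu.2 with hxu | hyu <;> rcases hv.2 with hxv | hyv
    · exact huv (hN.eq_of_dist_lt hu.1 hv.1 hxu hxv)
    · exact (hsplit u hu.1 v hv.1 huv hxu).not_gt hyv
    · exact (hsplit v hv.1 u hu.1 (Ne.symm huv) hxv).not_gt hyu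
    · exact huv (hN.eq_of_dist_lt hu.1 hv.1 hyu hyv)
  have : Nonempty α := ⟨x⟩
  obtain ⟨a, ha⟩ := card_le_one_iff_subset_singleton.1 hS
  rw [← sum_filter_of_ne (p := fun u => dist x u < r ∨ dist y u < r) fun u _ hu => ?_]
  · calc ∑ u ∈ S, |tent u r x - tent u r y|
        ≤ ∑ u ∈ {a}, |tent u r x - tent u r y| :=
          sum_le_sum_of_subset_of_nonneg ha fun _ _ _ => abs_nonneg _
      _ ≤ dist x y := by rw [sum_singleton]; exact abs_tent_sub_tent_le x y
  · by_contra h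
    push Not at h
    exact hu (abs_tent_sub_tent_eq_zero h.1 h.2)

end Tent

namespace SimpleGraph

variable {V : Type*}

theorem Walk.abs_sub_le_sum_darts {G : SimpleGraph V} (h : V → ℝ) {u v : V} (p : G.Walk u v) :
    |h u - h v| ≤ (p.darts.map fun d => |h d.fst - h d.snd|).sum := by
  induction p with
  | nil => simp
  | cons _ p ih =>
    simp only [Walk.darts_cons, List.map_cons, List.sum_cons]
    exact (abs_sub_le _ _ _).trans (add_le_add_right ih _)

theorem Walk.IsPath.disjoint_darts_reverse {G : SimpleGraph V} {u v : V} {p : G.Walk u v}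
    (hp : p.IsPath) : p.darts.Disjoint p.reverse.darts := fun d hd hd' =>
  d.symm_ne (List.inj_on_of_nodup_map hp.edges_nodup (Walk.mem_darts_reverse.mp hd') hd
    d.edge_symm)

variable [Fintype V] (G : SimpleGraph V)

-- Each edge is counted once per orientation, so `mstWeight X d` is the least
-- `G.dartWeight d / 2` over spanning trees `G`.
noncomputable def dartWeight (f : V → V → ℝ) : ℝ :=
  ∑ p : V × V, if G.Adj p.1 p.2 then f p.1 p.2 else 0

theorem dartWeight_eq_sum_dart (f : V → V → ℝ) :
    G.dartWeight f = ∑ d : G.Dart, f d.fst d.snd := by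
  rw [dartWeight, ← sum_filter]
  exact sum_bij' (fun p hp => ⟨p, (mem_filter.1 hp).2⟩) (fun d _ => d.toProd)
    (by simp) (by simp) (by simp) (by simp) (by simp)

theorem dartWeight_mono {f g : V → V → ℝ} (hfg : ∀ x y, G.Adj x y → f x y ≤ g x y) :
    G.dartWeight f ≤ G.dartWeight g := by
  simp only [dartWeight_eq_sum_dart]
  exact sum_le_sum fun d _ => hfg _ _ d.adj

theorem sum_dartWeight {ι : Type*} (s : Finset ι) (f : ι → V → V → ℝ) :
    ∑ i ∈ s, G.dartWeight (f i) = G.dartWeight fun x y => ∑ i ∈ s, f i x y := by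
  simp only [dartWeight_eq_sum_dart]
  exact sum_comm

theorem dartWeight_pos [Nontrivial V] (hG : G.Preconnected) {f : V → V → ℝ}
    (hf : ∀ x y, G.Adj x y → 0 < f x y) : 0 < G.dartWeight f := by
  obtain ⟨v⟩ := ‹Nontrivial V›.to_nonempty
  obtain ⟨w, hvw⟩ := hG.exists_adj_of_nontrivial v
  rw [dartWeight_eq_sum_dart]
  exact sum_pos (fun d _ => hf _ _ d.adj) ⟨⟨(v, w), hvw⟩, mem_univ _⟩

theorem two_mul_abs_sub_le_dartWeight (hG : G.Preconnected) (h : V → ℝ) (u v : V) :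
    2 * |h u - h v| ≤ G.dartWeight fun x y => |h x - h y| := by
  obtain ⟨p, hp⟩ := (hG u v).some.toPath
  have hnodup : (p.darts ++ p.reverse.darts).Nodup :=
    List.nodup_append.2 ⟨Walk.darts_nodup_of_support_nodup hp.support_nodup,
      Walk.darts_nodup_of_support_nodup hp.reverse.support_nodup,
      fun _ ha _ hb hab => hp.disjoint_darts_reverse ha (hab ▸ hb)⟩
  calc 2 * |h u - h v| = |h u - h v| + |h v - h u| := by rw [abs_sub_comm]; ring
    _ ≤ ((p.darts ++ p.reverse.darts).map fun d => |h d.fst - h d.snd|).sum := by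
      rw [List.map_append, List.sum_append]
      exact add_le_add (p.abs_sub_le_sum_darts h) (p.reverse.abs_sub_le_sum_darts h)
    _ = ∑ d ∈ (p.darts ++ p.reverse.darts).toFinset, |h d.fst - h d.snd| :=
      (List.sum_toFinset _ hnodup).symm
    _ ≤ ∑ d : G.Dart, |h d.fst - h d.snd| :=
      sum_le_univ_sum_of_nonneg fun _ => abs_nonneg _
    _ = G.dartWeight fun x y => |h x - h y| :=
      (G.dartWeight_eq_sum_dart fun x y => |h x - h y|).symm

end SimpleGraph

theorem card_mul_le_dartWeight_dist {V : Type*} [PseudoMetricSpace V] [Fintype V]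
    {G : SimpleGraph V} (hG : G.Preconnected) {N : Finset V}
    {r : ℝ} (hr : 0 ≤ r) (hN : (N : Set V).Pairwise fun u v => 2 * r ≤ dist u v)
    (hcard : 1 < #N) : #N * (2 * r) ≤ G.dartWeight dist := by
  have hpeak : ∀ u ∈ N, 2 * r ≤ G.dartWeight fun x y => |tent u r x - tent u r y| := by
    intro u hu
    obtain ⟨v, hv, hvu⟩ := exists_mem_ne hcard u
    have hrv : r ≤ dist v u := by linarith [hN hv hu hvu]
    simpa [tent_self hr, tent_eq_zero hrv, abs_of_nonneg hr] using
      G.two_mul_abs_sub_le_dartWeight hG (tent u r) u v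
  calc #N * (2 * r) = ∑ _u ∈ N, 2 * r := by rw [sum_const, nsmul_eq_mul]
    _ ≤ ∑ u ∈ N, G.dartWeight fun x y => |tent u r x - tent u r y| := sum_le_sum hpeak
    _ = G.dartWeight fun x y => ∑ u ∈ N, |tent u r x - tent u r y| := G.sum_dartWeight _ _
    _ ≤ G.dartWeight dist := G.dartWeight_mono fun x y _ => sum_abs_tent_sub_tent_le hN x y

theorem exists_isTree_mstWeight_eq (X : Type*) [Fintype X] [Nonempty X] (d : X → X → ℝ) :
    ∃ G : SimpleGraph X, G.IsTree ∧ mstWeight X d = G.dartWeight d / 2 := by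
  obtain ⟨T, -, hT⟩ := SimpleGraph.connected_top.exists_isTree_le (V := X)
  have hfin : {w : ℝ | ∃ G : SimpleGraph X, G.IsTree ∧ w = G.dartWeight d / 2}.Finite :=
    (Set.finite_range fun G : SimpleGraph X => G.dartWeight d / 2).subset
      fun _ ⟨G, _, hw⟩ => ⟨G, hw.symm⟩
  refine Set.Nonempty.csInf_mem ?_ hfin
  exact ⟨_, T, hT, rfl⟩

theorem stmt_3_general (X : Type*) [MetricSpace X] [Fintype X] (hX : 2 ≤ Fintype.card X)
    (Δ : ℝ) (hΔ : 0 < Δ) (N : Finset X)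
    (hpack : ∀ u ∈ N, ∀ v ∈ N, u ≠ v → Δ < dist u v) :
    N.card ≤ ⌈(2 / Δ) * mstWeight X (fun a b => dist a b)⌉₊ := by
  have : Nontrivial X := Fintype.one_lt_card_iff_nontrivial.1 hX
  obtain ⟨G, hG, hw⟩ := exists_isTree_mstWeight_eq X fun a b => dist a b
  have hGconn := hG.connected.preconnected
  rw [hw]
  rcases le_or_gt N.card 1 with hN | hN
  · have := G.dartWeight_pos hGconn fun x y hxy => dist_pos.2 hxy.ne
    exact hN.trans (Nat.one_le_ceil_iff.2 (by positivity))
  · have hsep : (N : Set X).Pairwise fun u v => 2 * (Δ / 2) ≤ dist u v :=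
      fun u hu v hv huv => by linarith [hpack u hu v hv huv]
    have := card_mul_le_dartWeight_dist hGconn (by positivity) hsep hN
    refine Nat.cast_le.1 (le_trans ?_ (Nat.le_ceil _))
    calc (#N : ℝ) = #N * (2 * (Δ / 2)) / Δ := by field_simp
      _ ≤ G.dartWeight dist / Δ := by gcongr
      _ = 2 / Δ * (G.dartWeight dist / 2) := by ring

/-- If `N` is a `Δ`-net of a finite metric space `X` with at least two points,
then `|N| ≤ ⌈(2/Δ)·w(MST(X))⌉`. -/
theorem stmt_3 (X : Type*) [MetricSpace X] [Fintype X] (hX : 2 ≤ Fintype.card X)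
    (Δ : ℝ) (hΔ : 0 < Δ) (N : Finset X)
    (hpack : ∀ u ∈ N, ∀ v ∈ N, u ≠ v → Δ < dist u v)
    (hcover : ∀ x : X, ∃ u ∈ N, dist x u ≤ Δ) :
    N.card ≤ ⌈(2 / Δ) * mstWeight X (fun a b => dist a b)⌉₊ :=
  stmt_3_general X hX Δ hΔ N hpack
end

section
/- For any set B ⊆ [n] and any α ∈ [2/3, 1), the α-shadow S_α(B) of B on the path [n] satisfies |S_α(B)| ≤ |B| / (2α − 1). -/
open scoped Classical

/-- The left `α`-shadow of `B` on the path `[1..n]`: all `b` such that for some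
`a ≤ b`, at least an `α` fraction of the interval `[a,b]` lies in `B`. -/
noncomputable def leftShadow (n : ℕ) (α : ℝ) (B : Finset ℕ) : Finset ℕ :=
  (Finset.Icc 1 n).filter (fun b => ∃ a, 1 ≤ a ∧ a ≤ b ∧
    α * ((Finset.Icc a b).card : ℝ) ≤ ((Finset.Icc a b ∩ B).card : ℝ))

/-- The right `α`-shadow of `B` on the path `[1..n]`. -/
noncomputable def rightShadow (n : ℕ) (α : ℝ) (B : Finset ℕ) : Finset ℕ :=
  (Finset.Icc 1 n).filter (fun b => ∃ c, b ≤ c ∧ c ≤ n ∧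
    α * ((Finset.Icc b c).card : ℝ) ≤ ((Finset.Icc b c ∩ B).card : ℝ))

/-- The `α`-shadow of `B` on the path `[1..n]`. -/
noncomputable def shadow (n : ℕ) (α : ℝ) (B : Finset ℕ) : Finset ℕ :=
  leftShadow n α B ∪ rightShadow n α B

lemma leftAux (α : ℝ) (hα0 : 0 < α) (B : Finset ℕ) :
    ∀ q : ℕ, α * (((Finset.Icc 1 q).filter (fun b => ∃ a, 1 ≤ a ∧ a ≤ b ∧
      α * ((Finset.Icc a b).card : ℝ) ≤ ((Finset.Icc a b ∩ B).card : ℝ))).card : ℝ)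
      ≤ ((B ∩ Finset.Icc 1 q).card : ℝ) := by
  intro q
  induction q using Nat.strong_induction_on with
  | _ q ih =>
  set P : ℕ → Prop := fun b => ∃ a, 1 ≤ a ∧ a ≤ b ∧
      α * ((Finset.Icc a b).card : ℝ) ≤ ((Finset.Icc a b ∩ B).card : ℝ) with hP
  set L := (Finset.Icc 1 q).filter (fun b => P b) with hL
  by_cases hne : L.Nonempty
  · obtain ⟨hbmem, hPb⟩ := Finset.mem_filter.1 (L.max'_mem hne)
    set b := L.max' hne
    obtain ⟨hb1, hbq⟩ := Finset.mem_Icc.1 hbmem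
    obtain ⟨a, ha1, hab, hden⟩ := hPb
    -- L ⊆ Icc a b ∪ filter on Icc 1 (a-1)
    have hsub : L ⊆ Finset.Icc a b ∪ (Finset.Icc 1 (a-1)).filter (fun b => P b) := by
      intro x hx
      obtain ⟨hxmem, hPx⟩ := Finset.mem_filter.1 hx
      obtain ⟨hx1, _⟩ := Finset.mem_Icc.1 hxmem
      have hxb : x ≤ b := L.le_max' x hx
      rcases le_or_gt a x with h | h
      · exact Finset.mem_union_left _ (Finset.mem_Icc.2 ⟨h, hxb⟩)
      · exact Finset.mem_union_right _ (Finset.mem_filter.2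
          ⟨Finset.mem_Icc.2 ⟨hx1, by omega⟩, hPx⟩)
    have hcard : (L.card : ℝ) ≤ ((Finset.Icc a b).card : ℝ)
        + (((Finset.Icc 1 (a-1)).filter (fun b => P b)).card : ℝ) := by
      have := (Finset.card_le_card hsub).trans (Finset.card_union_le _ _)
      exact_mod_cast this
    have hih := ih (a-1) (by omega)
    -- disjoint count
    have hdisj : Disjoint (Finset.Icc a b ∩ B) (B ∩ Finset.Icc 1 (a-1)) := by
      apply Finset.disjoint_left.2
      intro x hx hx'
      have h1 := (Finset.mem_inter.1 hx).1
      have h2 := (Finset.mem_inter.1 hx').2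
      have := Finset.mem_Icc.1 h1
      have := Finset.mem_Icc.1 h2
      omega
    have hunion : (Finset.Icc a b ∩ B) ∪ (B ∩ Finset.Icc 1 (a-1)) ⊆ B ∩ Finset.Icc 1 q := by
      intro x hx
      rcases Finset.mem_union.1 hx with h | h
      · obtain ⟨h1, h2⟩ := Finset.mem_inter.1 h
        have := Finset.mem_Icc.1 h1
        exact Finset.mem_inter.2 ⟨h2, Finset.mem_Icc.2 (by omega)⟩
      · obtain ⟨h1, h2⟩ := Finset.mem_inter.1 h
        have := Finset.mem_Icc.1 h2
        exact Finset.mem_inter.2 ⟨h1, Finset.mem_Icc.2 (by omega)⟩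
    have hsum : ((Finset.Icc a b ∩ B).card : ℝ) + ((B ∩ Finset.Icc 1 (a-1)).card : ℝ)
        ≤ ((B ∩ Finset.Icc 1 q).card : ℝ) := by
      have := Finset.card_union_of_disjoint hdisj ▸ Finset.card_le_card hunion
      exact_mod_cast this
    have h1 : α * (L.card : ℝ) ≤ α * ((Finset.Icc a b).card : ℝ)
        + α * (((Finset.Icc 1 (a-1)).filter (fun b => P b)).card : ℝ) := by
      nlinarith [hcard]
    linarith [h1, hden, hih, hsum]
  · rw [Finset.not_nonempty_iff_eq_empty.1 hne]
    simp

lemma rightAux (α : ℝ) (hα0 : 0 < α) (B : Finset ℕ) (n : ℕ) :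
    ∀ k m : ℕ, n + 1 - m ≤ k → α * (((Finset.Icc m n).filter (fun b => ∃ c, b ≤ c ∧ c ≤ n ∧
      α * ((Finset.Icc b c).card : ℝ) ≤ ((Finset.Icc b c ∩ B).card : ℝ))).card : ℝ)
      ≤ ((B ∩ Finset.Icc m n).card : ℝ) := by
  intro k
  induction k with
  | zero =>
    intro m hm
    have : Finset.Icc m n = ∅ := Finset.Icc_eq_empty (by omega)
    rw [this]
    simp
  | succ k ih =>
    intro m hm
    set P : ℕ → Prop := fun b => ∃ c, b ≤ c ∧ c ≤ n ∧
        α * ((Finset.Icc b c).card : ℝ) ≤ ((Finset.Icc b c ∩ B).card : ℝ) with hP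
    set R := (Finset.Icc m n).filter (fun b => P b) with hR
    by_cases hne : R.Nonempty
    · obtain ⟨hbmem, hPb⟩ := Finset.mem_filter.1 (R.min'_mem hne)
      set b := R.min' hne
      obtain ⟨hmb, hbn⟩ := Finset.mem_Icc.1 hbmem
      obtain ⟨c, hbc, hcn, hden⟩ := hPb
      have hsub : R ⊆ Finset.Icc b c ∪ (Finset.Icc (c+1) n).filter (fun b => P b) := by
        intro x hx
        obtain ⟨hxmem, hPx⟩ := Finset.mem_filter.1 hx
        obtain ⟨_, hxn⟩ := Finset.mem_Icc.1 hxmem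
        have hbx : b ≤ x := R.min'_le x hx
        rcases le_or_gt x c with h | h
        · exact Finset.mem_union_left _ (Finset.mem_Icc.2 ⟨hbx, h⟩)
        · exact Finset.mem_union_right _ (Finset.mem_filter.2
            ⟨Finset.mem_Icc.2 ⟨by omega, hxn⟩, hPx⟩)
      have hcard : (R.card : ℝ) ≤ ((Finset.Icc b c).card : ℝ)
          + (((Finset.Icc (c+1) n).filter (fun b => P b)).card : ℝ) := by
        have := (Finset.card_le_card hsub).trans (Finset.card_union_le _ _)
        exact_mod_cast this
      have hih := ih (c+1) (by omega)
      have hdisj : Disjoint (Finset.Icc b c ∩ B) (B ∩ Finset.Icc (c+1) n) := by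
        apply Finset.disjoint_left.2
        intro x hx hx'
        have h1 := Finset.mem_Icc.1 (Finset.mem_inter.1 hx).1
        have h2 := Finset.mem_Icc.1 (Finset.mem_inter.1 hx').2
        omega
      have hunion : (Finset.Icc b c ∩ B) ∪ (B ∩ Finset.Icc (c+1) n) ⊆ B ∩ Finset.Icc m n := by
        intro x hx
        rcases Finset.mem_union.1 hx with h | h
        · obtain ⟨h1, h2⟩ := Finset.mem_inter.1 h
          have := Finset.mem_Icc.1 h1
          exact Finset.mem_inter.2 ⟨h2, Finset.mem_Icc.2 (by omega)⟩
        · obtain ⟨h1, h2⟩ := Finset.mem_inter.1 h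
          have := Finset.mem_Icc.1 h2
          exact Finset.mem_inter.2 ⟨h1, Finset.mem_Icc.2 (by omega)⟩
      have hsum : ((Finset.Icc b c ∩ B).card : ℝ) + ((B ∩ Finset.Icc (c+1) n).card : ℝ)
          ≤ ((B ∩ Finset.Icc m n).card : ℝ) := by
        have := Finset.card_union_of_disjoint hdisj ▸ Finset.card_le_card hunion
        exact_mod_cast this
      have h1 : α * (R.card : ℝ) ≤ α * ((Finset.Icc b c).card : ℝ)
          + α * (((Finset.Icc (c+1) n).filter (fun b => P b)).card : ℝ) := by
        nlinarith [hcard]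
      linarith [h1, hden, hih, hsum]
    · rw [Finset.not_nonempty_iff_eq_empty.1 hne]
      simp


/-- For `α ∈ [2/3, 1)`, the `α`-shadow of `B ⊆ [n]` has size at most `|B|/(2α−1)`. -/
theorem stmt_6 (n : ℕ) (α : ℝ) (B : Finset ℕ) (hB : B ⊆ Finset.Icc 1 n)
    (hα1 : 2 / 3 ≤ α) (hα2 : α < 1) :
    ((shadow n α B).card : ℝ) ≤ (B.card : ℝ) / (2 * α - 1) := by
  have hα0 : (0:ℝ) < α := by linarith
  have hL : α * ((leftShadow n α B).card : ℝ) ≤ (B.card : ℝ) := by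
    have := leftAux α hα0 B n
    rwa [Finset.inter_eq_left.2 hB] at this
  have hRR : α * ((rightShadow n α B).card : ℝ) ≤ (B.card : ℝ) := by
    have := rightAux α hα0 B n n 1 (by omega)
    rwa [Finset.inter_eq_left.2 hB] at this
  have hBL : B ⊆ leftShadow n α B := by
    intro x hx
    have hxI := hB hx
    refine Finset.mem_filter.2 ⟨hxI, x, (Finset.mem_Icc.1 hxI).1, le_refl _, ?_⟩
    rw [Finset.Icc_self, Finset.singleton_inter_of_mem hx]
    simp
    linarith
  have hBR : B ⊆ rightShadow n α B := by
    intro x hx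
    have hxI := hB hx
    refine Finset.mem_filter.2 ⟨hxI, x, le_refl _, (Finset.mem_Icc.1 hxI).2, ?_⟩
    rw [Finset.Icc_self, Finset.singleton_inter_of_mem hx]
    simp
    linarith
  have hcards : ((shadow n α B).card : ℝ) + (B.card : ℝ)
      ≤ ((leftShadow n α B).card : ℝ) + ((rightShadow n α B).card : ℝ) := by
    have h1 := Finset.card_union_add_card_inter (leftShadow n α B) (rightShadow n α B)
    have h2 : B.card ≤ (leftShadow n α B ∩ rightShadow n α B).card :=
      Finset.card_le_card (Finset.subset_inter hBL hBR)
    have : (shadow n α B).card + B.card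
        ≤ (leftShadow n α B).card + (rightShadow n α B).card := by
      unfold shadow; omega
    exact_mod_cast this
  have key : α * ((shadow n α B).card : ℝ) ≤ (2 - α) * (B.card : ℝ) := by
    nlinarith [hcards, hL, hRR]
  have hS0 : (0:ℝ) ≤ ((shadow n α B).card : ℝ) := Nat.cast_nonneg _
  have hB0 : (0:ℝ) ≤ (B.card : ℝ) := Nat.cast_nonneg _
  rw [le_div_iff₀ (by linarith : (0:ℝ) < 2 * α - 1)]
  nlinarith [key, mul_nonneg (sq_nonneg (α - 1)) hB0, hα0, hS0,
    mul_le_mul_of_nonneg_left key (by linarith : (0:ℝ) ≤ 2 * α - 1)]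
end

section
/- Let 0 < ν < 1 and let m > ν^{-1} be an integer. For any integer ℓ ≥ 1, if a set Z of ℓ elements is chosen uniformly at random (without replacement) from a set L of size |L| > (1 − ν/2)·m, and B ⊆ L satisfies |B| < (1 − ν)·m, then Pr[Z ⊆ B] ≤ O(√ℓ)·((1−ν)/(1−ν/2))^{ℓ−1}·|B|/m. -/
private lemma desc_aux : ∀ (ℓ b n : ℕ), b ≤ n →
    b.descFactorial ℓ * n ^ ℓ ≤ n.descFactorial ℓ * b ^ ℓ
  | 0, b, n, _ => by simp
  | (ℓ+1), b, n, h => by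
    have ih := desc_aux ℓ b n h
    have h1 : (b - ℓ) * n ≤ (n - ℓ) * b := by
      rcases le_or_gt ℓ b with hb | hb
      · rw [Nat.sub_mul, Nat.sub_mul]
        rw [mul_comm n b]
        exact Nat.sub_le_sub_left (Nat.mul_le_mul_left ℓ h) _
      · simp [Nat.sub_eq_zero_of_le hb.le]
    calc b.descFactorial (ℓ+1) * n ^ (ℓ+1)
        = ((b - ℓ) * n) * (b.descFactorial ℓ * n ^ ℓ) := by
          rw [Nat.descFactorial_succ, pow_succ]; ring
      _ ≤ ((n - ℓ) * b) * (n.descFactorial ℓ * b ^ ℓ) := Nat.mul_le_mul h1 ih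
      _ = n.descFactorial (ℓ+1) * b ^ (ℓ+1) := by
          rw [Nat.descFactorial_succ, pow_succ]; ring

private lemma choose_aux (b n ℓ : ℕ) (h : b ≤ n) :
    b.choose ℓ * n ^ ℓ ≤ n.choose ℓ * b ^ ℓ := by
  have := desc_aux ℓ b n h
  rw [Nat.descFactorial_eq_factorial_mul_choose, Nat.descFactorial_eq_factorial_mul_choose] at this
  have hfac : 0 < (Nat.factorial ℓ) := Nat.factorial_pos ℓ
  apply Nat.le_of_mul_le_mul_left _ hfac
  calc (Nat.factorial ℓ) * (b.choose ℓ * n ^ ℓ) = (Nat.factorial ℓ) * b.choose ℓ * n ^ ℓ := by ring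
    _ ≤ (Nat.factorial ℓ) * n.choose ℓ * b ^ ℓ := this
    _ = (Nat.factorial ℓ) * (n.choose ℓ * b ^ ℓ) := by ring

/-- If a set `Z` of `ℓ` elements is chosen uniformly at random from `L` with
`|L| > (1 - ν/2)·m`, and `B ⊆ L` has `|B| < (1 - ν)·m`, then
`Pr[Z ⊆ B] = C(|B|,ℓ)/C(|L|,ℓ) ≤ O(√ℓ)·((1-ν)/(1-ν/2))^(ℓ-1)·|B|/m`. -/
theorem stmt_12 :
    ∃ C : ℝ, 0 < C ∧ ∀ (α : Type) (L B : Finset α), B ⊆ L →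
      ∀ (ν : ℝ) (m ℓ : ℕ), 0 < ν → ν < 1 → ν⁻¹ < (m : ℝ) → 1 ≤ ℓ →
        (1 - ν / 2) * (m : ℝ) < (L.card : ℝ) →
        (B.card : ℝ) < (1 - ν) * (m : ℝ) →
        ((B.card.choose ℓ : ℝ) / (L.card.choose ℓ : ℝ)) ≤
          C * Real.sqrt ℓ * ((1 - ν) / (1 - ν / 2)) ^ (ℓ - 1) * (B.card : ℝ) / (m : ℝ) := by
  refine ⟨2, by norm_num, ?_⟩
  intro α L B hBL ν m ℓ hν0 hν1 hm hℓ hL hB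
  set b := B.card with hb
  set n := L.card with hn
  have hbn : b ≤ n := Finset.card_le_card hBL
  have h1ν : (0:ℝ) < 1 - ν := by linarith
  have hν2 : (0:ℝ) < 1 - ν / 2 := by linarith
  have hm0 : (0:ℝ) < m := lt_trans (by positivity) hm
  have hn0 : (0:ℝ) < n := lt_trans (by positivity) hL
  have hb0 : (0:ℝ) ≤ b := Nat.cast_nonneg b
  have hr0 : (0:ℝ) ≤ (1 - ν) / (1 - ν / 2) := by positivity
  have hsq : (1:ℝ) ≤ Real.sqrt ℓ := by
    have : Real.sqrt 1 ≤ Real.sqrt ℓ := Real.sqrt_le_sqrt (by exact_mod_cast hℓ)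
    simpa using this
  have hrhs0 : (0:ℝ) ≤ 2 * Real.sqrt ℓ * ((1 - ν) / (1 - ν / 2)) ^ (ℓ - 1) * (b : ℝ) / (m : ℝ) := by
    apply div_nonneg _ hm0.le
    apply mul_nonneg (mul_nonneg (by linarith) (pow_nonneg hr0 _)) hb0
  by_cases hc : ℓ ≤ n
  · have hch : (0:ℝ) < (n.choose ℓ : ℝ) := by exact_mod_cast Nat.choose_pos hc
    have key1 : (b.choose ℓ : ℝ) / (n.choose ℓ : ℝ) ≤ ((b : ℝ) / n) ^ ℓ := by
      rw [div_pow, div_le_div_iff₀ hch (by positivity)]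
      have := choose_aux b n ℓ hbn
      rw [mul_comm ((n.choose ℓ)) (b ^ ℓ)] at this
      exact_mod_cast this
    have hbr : (b : ℝ) / n ≤ (1 - ν) / (1 - ν / 2) := by
      rw [div_le_div_iff₀ hn0 hν2]
      nlinarith [mul_le_mul_of_nonneg_left hL.le h1ν.le]
    have hbm : (b : ℝ) / n ≤ 2 * b / m := by
      rw [div_le_div_iff₀ hn0 hm0]
      nlinarith [mul_le_mul_of_nonneg_left hL.le (by linarith : (0:ℝ) ≤ 2 * b)]
    calc (b.choose ℓ : ℝ) / (n.choose ℓ : ℝ) ≤ ((b : ℝ) / n) ^ ℓ := key1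
      _ = ((b : ℝ) / n) ^ (ℓ - 1) * ((b : ℝ) / n) := by
          rw [← pow_succ]; congr 1; omega
      _ ≤ ((1 - ν) / (1 - ν / 2)) ^ (ℓ - 1) * (2 * b / m) := by
          apply mul_le_mul (pow_le_pow_left₀ (by positivity) hbr _) hbm (by positivity)
            (pow_nonneg hr0 _)
      _ ≤ Real.sqrt ℓ * (((1 - ν) / (1 - ν / 2)) ^ (ℓ - 1) * (2 * b / m)) := by
          apply le_mul_of_one_le_left _ hsq
          apply mul_nonneg (pow_nonneg hr0 _) (by positivity)
      _ = 2 * Real.sqrt ℓ * ((1 - ν) / (1 - ν / 2)) ^ (ℓ - 1) * (b : ℝ) / (m : ℝ) := by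
          ring
  · have : n.choose ℓ = 0 := Nat.choose_eq_zero_of_lt (by omega)
    rw [this]
    simpa using hrhs0
end

section
/- Let T be a k-HST (k > 1) with leaf set L and root r, and suppose for each node x a set Z_x ⊆ L(x) is fixed. Build a graph H containing, for each internal node x with children x_1,…,x_t, all edges between Z_x and Z_{x_j} for each j, each edge {a,b} having weight d_T(a,b). Fix an attack B ⊆ L and call a leaf u safe if every ancestor x of u satisfies Z_x \ B ≠ ∅. Then for every safe leaf u, every ancestor x of u, and every v ∈ Z_x \ B, the graph H \ B contains a path from u to v of length at most (1 + 1/(k−1))·Γ_x. -/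
open scoped Classical

/-- Length of a path (list of points) with respect to distance `d`. -/
noncomputable def pathLen {X : Type*} (d : X → X → ℝ) : List X → ℝ
  | [] => 0
  | [_] => 0
  | a :: b :: l => d a b + pathLen d (b :: l)

/-!
Induct along the ancestor chain from the leaf `u` up to `x`. At the leaf the path is `[u]`.
If `c` is the parent of `b`, extend the path from `u` to some surviving `u' ∈ Z b \ B` (which
exists by safety) by the biclique edge `{u', v}`, of weight `Γ (lca u' v) ≤ Γ c`. With
`C = 1 + 1/(k-1) = k/(k-1)` this gives length `≤ C·Γ b + Γ c ≤ Γ c/(k-1) + Γ c = C·Γ c`,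
using `k·Γ b ≤ Γ c`.
-/

theorem pathLen_append_singleton {X : Type*} (d : X → X → ℝ) :
    ∀ {l : List X} {b : X}, l.getLast? = some b →
      ∀ a, pathLen d (l ++ [a]) = pathLen d l + d b a
  | [], _, h, _ => by simp at h
  | [c], b, h, a => by
    obtain rfl : c = b := by simpa using h
    simp [pathLen]
  | c :: c' :: t, b, h, a => by
    have ih := pathLen_append_singleton d (l := c' :: t) (by simpa using h) a
    simp only [List.cons_append, pathLen] at ih ⊢
    rw [ih, add_assoc]

def IsAvoidingWalk {V : Type*} (G : SimpleGraph V) (B : Finset V) (u v : V)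
    (l : List V) : Prop :=
  l ≠ [] ∧ l.IsChain G.Adj ∧ (∀ w ∈ l, w ∉ B) ∧ l.head? = some u ∧ l.getLast? = some v

namespace IsAvoidingWalk

variable {V : Type*} {G : SimpleGraph V} {B : Finset V} {u v w : V} {l : List V}

theorem singleton (hu : u ∉ B) : IsAvoidingWalk G B u u [u] :=
  ⟨List.cons_ne_nil _ _, List.isChain_singleton u, by simpa using hu, rfl, rfl⟩

theorem concat (h : IsAvoidingWalk G B u v l) (hvw : G.Adj v w) (hw : w ∉ B) :
    IsAvoidingWalk G B u w (l ++ [w]) := by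
  obtain ⟨hne, hchain, hB, hhead, hlast⟩ := h
  refine ⟨by simp, ?_, ?_, ?_, by simp⟩
  · refine hchain.append (List.isChain_singleton w) fun a ha b hb => ?_
    rw [hlast, Option.mem_some_iff] at ha
    rw [List.head?_cons, Option.mem_some_iff] at hb
    exact ha ▸ hb ▸ hvw
  · intro a ha
    rcases List.mem_append.mp ha with ha | ha
    · exact hB a ha
    · exact (List.mem_singleton.mp ha) ▸ hw
  · rwa [List.head?_append_of_ne_nil _ hne]

end IsAvoidingWalk

namespace RTree

variable {V : Type*} (T : RTree V)

theorem eq_of_ancestor_of_children_eq_empty [Fintype V] {u w : V} (hu : T.children u = ∅)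
    (h : T.ancestor u w) : w = u := by
  rcases h.cases_tail with rfl | ⟨b, -, hb⟩
  · rfl
  · have : b ∈ T.children u := by simpa [children] using hb
    simp [hu] at this

variable {T} {k : ℝ} {Γ : V → ℝ}

theorem label_le_of_ancestor (hk : 1 ≤ k)
    (hHST : ∀ u v, T.parent u = some v → k * Γ u ≤ Γ v)
    {x w : V} (hw : 0 ≤ Γ w) (h : T.ancestor x w) : Γ w ≤ Γ x := by
  induction h with
  | refl => exact le_rfl
  | @tail b c _ hbc ih => nlinarith [hHST b c hbc]

theorem label_lca_le (hk : 1 ≤ k) (hHST : ∀ u v, T.parent u = some v → k * Γ u ≤ Γ v)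
    {lca : V → V → V} (hlca1 : ∀ u v, T.ancestor (lca u v) u)
    (hlca3 : ∀ u v w, T.ancestor w u → T.ancestor w v → T.ancestor w (lca u v))
    {a b c : V} (ha : T.ancestor c a) (hb : T.ancestor c b) (ha0 : 0 ≤ Γ a) :
    Γ (lca a b) ≤ Γ c :=
  label_le_of_ancestor hk hHST (ha0.trans (label_le_of_ancestor hk hHST ha0 (hlca1 a b)))
    (hlca3 a b c ha hb)

end RTree

theorem stretch_mul_add_le {k g g' : ℝ} (hk : 1 < k) (hg : k * g ≤ g') :
    (1 + 1 / (k - 1)) * g + g' ≤ (1 + 1 / (k - 1)) * g' := by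
  have hk1 : 0 < k - 1 := by linarith
  rw [← sub_nonneg]
  have : (1 + 1 / (k - 1)) * g' - ((1 + 1 / (k - 1)) * g + g') =
      (g' - k * g) / (k - 1) := by
    field_simp
    ring
  rw [this]
  exact div_nonneg (by linarith) hk1.le

open Finset RTree in
theorem exists_isAvoidingWalk_pathLen_le {V : Type*} [Fintype V] {T : RTree V} {k : ℝ}
    (hk : 1 < k) {Γ : V → ℝ} {lca : V → V → V} (hleaf : ∀ v, T.children v = ∅ → Γ v = 0)
    (hHST : ∀ u v, T.parent u = some v → k * Γ u ≤ Γ v)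
    (hlca1 : ∀ u v, T.ancestor (lca u v) u)
    (hlca3 : ∀ u v w, T.ancestor w u → T.ancestor w v → T.ancestor w (lca u v))
    {Z : V → Finset V} (hZ : ∀ x, Z x ⊆ T.leavesBelow x) {H : SimpleGraph V}
    (hH : ∀ b c a a', T.parent b = some c → a ∈ Z b → a' ∈ Z c → a ≠ a' → H.Adj a a')
    {B : Finset V} {u : V} (hu : T.children u = ∅) (huB : u ∉ B)
    (hsafe : ∀ x, T.ancestor x u → (Z x \ B).Nonempty) {x : V} (hx : T.ancestor x u) :
    ∀ v ∈ Z x \ B, ∃ l, IsAvoidingWalk H B u v l ∧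
      pathLen (fun a b => Γ (lca a b)) l ≤ (1 + 1 / (k - 1)) * Γ x := by
  have mem_Z {x a : V} (ha : a ∈ Z x) : T.children a = ∅ ∧ T.ancestor x a := by
    simpa [leavesBelow] using hZ x ha
  induction hx with
  | refl =>
    intro v hv
    obtain rfl : v = u :=
      T.eq_of_ancestor_of_children_eq_empty hu (mem_Z (mem_sdiff.mp hv).1).2
    exact ⟨[v], .singleton huB, by simp [pathLen, hleaf v hu]⟩
  | @tail b c hb hbc ih =>
    intro v hv
    obtain ⟨hvZ, hvB⟩ := mem_sdiff.mp hv
    obtain ⟨u', hu'⟩ := hsafe b hb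
    obtain ⟨l, hl, hlen⟩ := ih u' hu'
    obtain ⟨hu'leaf, hbu'⟩ := mem_Z (mem_sdiff.mp hu').1
    have hΓu : 0 ≤ Γ u := (hleaf u hu).ge
    have hΓb : 0 ≤ Γ b := hΓu.trans (label_le_of_ancestor hk.le hHST hΓu hb)
    have hΓbc : Γ b ≤ Γ c := label_le_of_ancestor hk.le hHST hΓb (.single hbc)
    by_cases hu'v : u' = v
    · subst hu'v
      exact ⟨l, hl, hlen.trans (by gcongr)⟩
    · have hedge : Γ (lca u' v) ≤ Γ c :=
        label_lca_le hk.le hHST hlca1 hlca3 (hbu'.tail hbc) (mem_Z hvZ).2 (hleaf u' hu'leaf).ge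
      have hadj : H.Adj u' v := hH b c u' v hbc (mem_sdiff.mp hu').1 hvZ hu'v
      refine ⟨l ++ [v], hl.concat hadj hvB, ?_⟩
      rw [pathLen_append_singleton _ hl.2.2.2.2]
      linarith [stretch_mul_add_le hk (hHST b c hbc)]

theorem stmt_14_general {V : Type*} [Fintype V] (T : RTree V) (k : ℝ) (hk : 1 < k)
    (Γ : V → ℝ) (lca : V → V → V)
    (hleaf0 : ∀ v, Γ v = 0 ↔ T.children v = ∅)
    (hHST : ∀ u v, T.parent u = some v → k * Γ u ≤ Γ v)
    (hlca1 : ∀ u v, T.ancestor (lca u v) u)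
    (hlca3 : ∀ u v w, T.ancestor w u → T.ancestor w v → T.ancestor w (lca u v))
    (Z : V → Finset V) (hZ : ∀ x, Z x ⊆ T.leavesBelow x)
    (H : SimpleGraph V)
    (hH : ∀ a b, H.Adj a b ↔ a ≠ b ∧ ∃ x y, T.parent y = some x ∧
      ((a ∈ Z x ∧ b ∈ Z y) ∨ (a ∈ Z y ∧ b ∈ Z x)))
    (B : Finset V)
    (u : V) (hu_leaf : T.children u = ∅) (huB : u ∉ B)
    (hsafe : ∀ x, T.ancestor x u → (Z x \ B).Nonempty)
    (x : V) (hx : T.ancestor x u)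
    (v : V) (hv : v ∈ Z x \ B) :
    ∃ l : List V, l ≠ [] ∧ l.Chain' H.Adj ∧ (∀ w ∈ l, w ∉ B) ∧
      l.head? = some u ∧ l.getLast? = some v ∧
      pathLen (fun a b => Γ (lca a b)) l ≤ (1 + 1 / (k - 1)) * Γ x := by
  have hbiclique : ∀ b c a a', T.parent b = some c → a ∈ Z b → a' ∈ Z c → a ≠ a' →
      H.Adj a a' := fun b c a a' hbc ha ha' hne =>
    (hH a a').mpr ⟨hne, c, b, hbc, .inr ⟨ha, ha'⟩⟩
  obtain ⟨l, ⟨hne, hchain, hB, hhead, hlast⟩, hlen⟩ :=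
    exists_isAvoidingWalk_pathLen_le hk (fun v => (hleaf0 v).mpr) hHST hlca1 hlca3 hZ
      hbiclique hu_leaf huB hsafe hx v hv
  exact ⟨l, hne, hchain, hB, hhead, hlast, hlen⟩

/-- In the biclique spanner of a `k`-HST (for each node `x` with child `y`, all
edges between `Z x` and `Z y`), every safe leaf `u` can reach every surviving
sampled vertex `v ∈ Z x \ B` of every ancestor `x` by a `B`-avoiding path of
length at most `(1 + 1/(k−1))·Γ x`. -/
theorem stmt_14 {V : Type*} [Fintype V] (T : RTree V) (k : ℝ) (hk : 1 < k)
    (Γ : V → ℝ) (lca : V → V → V)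
    (hleaf0 : ∀ v, Γ v = 0 ↔ T.children v = ∅)
    (hHST : ∀ u v, T.parent u = some v → k * Γ u ≤ Γ v)
    (hlca1 : ∀ u v, T.ancestor (lca u v) u)
    (hlca2 : ∀ u v, T.ancestor (lca u v) v)
    (hlca3 : ∀ u v w, T.ancestor w u → T.ancestor w v → T.ancestor w (lca u v))
    (Z : V → Finset V) (hZ : ∀ x, Z x ⊆ T.leavesBelow x)
    (H : SimpleGraph V)
    (hH : ∀ a b, H.Adj a b ↔ a ≠ b ∧ ∃ x y, T.parent y = some x ∧
      ((a ∈ Z x ∧ b ∈ Z y) ∨ (a ∈ Z y ∧ b ∈ Z x)))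
    (B : Finset V)
    (u : V) (hu_leaf : T.children u = ∅) (huB : u ∉ B)
    (hsafe : ∀ x, T.ancestor x u → (Z x \ B).Nonempty)
    (x : V) (hx : T.ancestor x u)
    (v : V) (hv : v ∈ Z x \ B) :
    ∃ l : List V, l ≠ [] ∧ l.Chain' H.Adj ∧ (∀ w ∈ l, w ∉ B) ∧
      l.head? = some u ∧ l.getLast? = some v ∧
      pathLen (fun a b => Γ (lca a b)) l ≤ (1 + 1 / (k - 1)) * Γ x :=
  stmt_14_general T k hk Γ lca hleaf0 hHST hlca1 hlca3 Z hZ H hH B u hu_leaf huB hsafe x hx v hv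
end

section
/- Under the same construction as the k-HST spanner (bicliques Z_x × Z_{x_j} for each internal node x and each child x_j), for any two safe leaves u, v ∉ B with x = lca(u,v), the graph H \ B contains a u–v path of length at most (2 + 2/(k−1))·d_T(u,v). -/
open scoped Classical

/-!
Fix a leaf `w`. Induction up the ancestors `x` of `w` shows that every surviving `z ∈ Z x \ B` is
joined to `w` in `H \ B` by a walk of length at most `k/(k-1) · Γ x`: a biclique edge of length
at most `Γ x` leads from `z` to a surviving vertex of `Z` at the child of `x` above `w`, and the
inductive bound there, at most `k/(k-1) · Γ x / k = Γ x/(k-1)`, leaves exactly that room.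
Gluing the walks from `u` and from `v` through a common `z ∈ Z (lca u v) \ B` gives
`2k/(k-1) = 2 + 2/(k-1)`.
-/

section pathLen

variable {X : Type*} (d : X → X → ℝ)

lemma pathLen_cons_of_head? {a b : X} {l : List X} (h : l.head? = some b) :
    pathLen d (a :: l) = d a b + pathLen d l := by
  obtain ⟨t, rfl⟩ : ∃ t, l = b :: t := List.head?_eq_some_iff.mp h
  rfl

lemma pathLen_append_tail :
    ∀ l₁ l₂ : List X, l₁.getLast? = l₂.head? →
      pathLen d (l₁ ++ l₂.tail) = pathLen d l₁ + pathLen d l₂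
  | [], l₂, h => by
    rw [List.getLast?_nil, eq_comm, List.head?_eq_none_iff] at h
    simp [h, pathLen]
  | [a], l₂, h => by
    obtain ⟨t, rfl⟩ := List.head?_eq_some_iff.mp (h.symm.trans List.getLast?_singleton)
    simp [pathLen]
  | a :: b :: t, l₂, h => by
    rw [List.getLast?_cons_cons] at h
    change d a b + pathLen d (b :: t ++ l₂.tail) = d a b + pathLen d (b :: t) + pathLen d l₂
    rw [pathLen_append_tail _ _ h, add_assoc]

lemma pathLen_reverse : ∀ l : List X, pathLen d l.reverse = pathLen (flip d) l
  | [] | [_] => rfl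
  | a :: b :: t => by
    rw [List.reverse_cons, ← List.tail_cons (a := b) (as := [a]),
      pathLen_append_tail d _ _ (by simp), pathLen_reverse (b :: t)]
    simp only [pathLen, add_zero, flip, add_comm]

end pathLen

namespace SimpleGraph

variable {V : Type*} (H : SimpleGraph V) (B : Finset V)

structure IsAvoidingWalk (a b : V) (l : List V) : Prop where
  isChain : l.IsChain H.Adj
  not_mem : ∀ w ∈ l, w ∉ B
  head? : l.head? = some a
  getLast? : l.getLast? = some b

namespace IsAvoidingWalk

variable {H B} {a b c : V} {l l' : List V}

lemma ne_nil (h : H.IsAvoidingWalk B a b l) : l ≠ [] := by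
  rintro rfl
  simpa using h.head?

lemma singleton (ha : a ∉ B) : H.IsAvoidingWalk B a a [a] :=
  ⟨.singleton a, by simpa using ha, rfl, rfl⟩

lemma cons (h : H.IsAvoidingWalk B b c l) (ha : a ∉ B) (hab : H.Adj a b) :
    H.IsAvoidingWalk B a c (a :: l) where
  isChain := h.isChain.cons fun _ hy => by
    rw [h.head?, Option.mem_some_iff] at hy
    exact hy ▸ hab
  not_mem := by simpa [ha] using h.not_mem
  head? := rfl
  getLast? := by
    obtain ⟨t, rfl⟩ := List.head?_eq_some_iff.mp h.head?
    simpa using h.getLast?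

lemma reverse (h : H.IsAvoidingWalk B a b l) : H.IsAvoidingWalk B b a l.reverse where
  isChain := List.isChain_reverse.mpr (h.isChain.imp fun _ _ hab => hab.symm)
  not_mem := by simpa using h.not_mem
  head? := by rw [List.head?_reverse, h.getLast?]
  getLast? := by rw [List.getLast?_reverse, h.head?]

lemma append_tail (h : H.IsAvoidingWalk B a b l) (h' : H.IsAvoidingWalk B b c l') :
    H.IsAvoidingWalk B a c (l ++ l'.tail) := by
  obtain ⟨t, rfl⟩ := List.head?_eq_some_iff.mp h'.head?
  refine ⟨?_, ?_, by simp [List.head?_append, h.head?], ?_⟩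
  · refine h.isChain.append h'.isChain.tail fun x hx y hy => ?_
    rw [h.getLast?, Option.mem_some_iff] at hx
    exact hx ▸ h'.isChain.rel_head? hy
  · simpa [or_imp, forall_and] using ⟨h.not_mem, fun w hw => h'.not_mem w (.tail _ hw)⟩
  · cases t with
    | nil => simpa [h.getLast?] using h'.getLast?
    | cons y t => simpa [List.getLast?_append] using h'.getLast?

end IsAvoidingWalk

end SimpleGraph

namespace RTree

variable {V : Type*} {k : ℝ} {Γ : V → ℝ}

lemma apply_le_of_ancestor {T : RTree V} (hk : 1 ≤ k)
    (hHST : ∀ u v, T.parent u = some v → k * Γ u ≤ Γ v)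
    {w x : V} (h : T.ancestor x w) (hw : 0 ≤ Γ w) : Γ w ≤ Γ x := by
  induction h with
  | refl => exact le_rfl
  | @tail b x _ hbx ih => nlinarith [hHST b x hbx]

variable [Fintype V] {T : RTree V}

lemma mem_leavesBelow {x a : V} : a ∈ T.leavesBelow x ↔ T.children a = ∅ ∧ T.ancestor x a := by
  simp [leavesBelow]

lemma eq_of_mem_leavesBelow {u z : V} (hu : T.children u = ∅) (hz : z ∈ T.leavesBelow u) :
    z = u := by
  rcases Relation.ReflTransGen.cases_tail (mem_leavesBelow.mp hz).2 with h | ⟨c, -, hc⟩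
  · exact h.symm
  · have : c ∈ T.children u := Finset.mem_filter.mpr ⟨Finset.mem_univ _, hc⟩
    simp [hu] at this

lemma leavesBelow_subset_of_parent {x y : V} (hxy : T.parent y = some x) :
    T.leavesBelow y ⊆ T.leavesBelow x := fun _ ha => by
  rw [mem_leavesBelow] at ha ⊢
  exact ⟨ha.1, ha.2.tail hxy⟩

lemma apply_lca_le_of_mem_leavesBelow (hk : 1 ≤ k)
    (hHST : ∀ u v, T.parent u = some v → k * Γ u ≤ Γ v)
    (hleaf0 : ∀ v, T.children v = ∅ → Γ v = 0) {lca : V → V → V}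
    (hlca1 : ∀ u v, T.ancestor (lca u v) u)
    (hlca3 : ∀ u v w, T.ancestor w u → T.ancestor w v → T.ancestor w (lca u v))
    {x a b : V} (ha : a ∈ T.leavesBelow x) (hb : b ∈ T.leavesBelow x) :
    Γ (lca a b) ≤ Γ x := by
  rw [mem_leavesBelow] at ha hb
  have ha0 := hleaf0 a ha.1
  have hlca0 : 0 ≤ Γ (lca a b) := ha0 ▸ apply_le_of_ancestor hk hHST (hlca1 a b) ha0.ge
  exact apply_le_of_ancestor hk hHST (hlca3 a b x ha.2 hb.2) hlca0

lemma exists_isAvoidingWalk_to_leaf (hk : 1 < k)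
    (hHST : ∀ u v, T.parent u = some v → k * Γ u ≤ Γ v)
    {Z : V → Finset V} (hZ : ∀ x, Z x ⊆ T.leavesBelow x) {H : SimpleGraph V}
    (hH : ∀ x y a b, T.parent y = some x → a ∈ Z x → b ∈ Z y → a ≠ b → H.Adj a b)
    {B : Finset V} {d : V → V → ℝ}
    (hd : ∀ x a b, a ∈ T.leavesBelow x → b ∈ T.leavesBelow x → d a b ≤ Γ x)
    {w : V} (hw_leaf : T.children w = ∅) (hw0 : 0 ≤ Γ w)
    (hwsafe : ∀ x, T.ancestor x w → (Z x \ B).Nonempty)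
    {x z : V} (hx : T.ancestor x w) (hz : z ∈ Z x \ B) :
    ∃ l, H.IsAvoidingWalk B z w l ∧ pathLen d l ≤ k / (k - 1) * Γ x := by
  have hk1 : 0 < k - 1 := by linarith
  rw [Finset.mem_sdiff] at hz
  induction hx generalizing z with
  | refl =>
    obtain rfl := T.eq_of_mem_leavesBelow hw_leaf (hZ w hz.1)
    exact ⟨[z], .singleton hz.2, by simpa [pathLen] using by positivity⟩
  | @tail b x hwb hbx ih =>
    obtain ⟨z', hz'⟩ := hwsafe b hwb
    rw [Finset.mem_sdiff] at hz'
    obtain ⟨l, hl, hlen⟩ := ih hz'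
    have hkb := hHST b x hbx
    have hb0 : 0 ≤ Γ b := hw0.trans (apply_le_of_ancestor hk.le hHST hwb hw0)
    have hx0 : 0 ≤ Γ x := by nlinarith
    have hchild : k / (k - 1) * Γ b ≤ Γ x / (k - 1) := by
      rw [div_mul_eq_mul_div]
      exact div_le_div_of_nonneg_right hkb hk1.le
    have hsplit : Γ x + Γ x / (k - 1) = k / (k - 1) * Γ x := by
      field_simp
      ring
    by_cases hzz : z = z'
    · subst hzz
      exact ⟨l, hl, by linarith⟩
    · refine ⟨z :: l, hl.cons hz.2 (hH x b z z' hbx hz.1 hz'.1 hzz), ?_⟩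
      have hedge : d z z' ≤ Γ x :=
        hd x z z' (hZ x hz.1) (T.leavesBelow_subset_of_parent hbx (hZ b hz'.1))
      rw [pathLen_cons_of_head? d hl.head?]
      linarith

end RTree

theorem stmt_15_general {V : Type*} [Fintype V] (T : RTree V) (k : ℝ) (hk : 1 < k)
    (Γ : V → ℝ) (lca : V → V → V)
    (hleaf0 : ∀ v, Γ v = 0 ↔ T.children v = ∅)
    (hHST : ∀ u v, T.parent u = some v → k * Γ u ≤ Γ v)
    (hlca1 : ∀ u v, T.ancestor (lca u v) u)
    (hlca2 : ∀ u v, T.ancestor (lca u v) v)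
    (hlca3 : ∀ u v w, T.ancestor w u → T.ancestor w v → T.ancestor w (lca u v))
    (Z : V → Finset V) (hZ : ∀ x, Z x ⊆ T.leavesBelow x)
    (H : SimpleGraph V)
    (hH : ∀ a b, H.Adj a b ↔ a ≠ b ∧ ∃ x y, T.parent y = some x ∧
      ((a ∈ Z x ∧ b ∈ Z y) ∨ (a ∈ Z y ∧ b ∈ Z x)))
    (B : Finset V)
    (u : V) (hu_leaf : T.children u = ∅)
    (husafe : ∀ x, T.ancestor x u → (Z x \ B).Nonempty)
    (v : V) (hv_leaf : T.children v = ∅)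
    (hvsafe : ∀ x, T.ancestor x v → (Z x \ B).Nonempty) :
    ∃ l : List V, l ≠ [] ∧ l.Chain' H.Adj ∧ (∀ w ∈ l, w ∉ B) ∧
      l.head? = some u ∧ l.getLast? = some v ∧
      pathLen (fun a b => Γ (lca a b)) l ≤ (2 + 2 / (k - 1)) * Γ (lca u v) := by
  have hbiclique x y a b (hxy : T.parent y = some x) (ha : a ∈ Z x) (hb : b ∈ Z y)
      (hab : a ≠ b) : H.Adj a b :=
    (hH a b).2 ⟨hab, x, y, hxy, .inl ⟨ha, hb⟩⟩
  have hdist x a b (ha : a ∈ T.leavesBelow x) (hb : b ∈ T.leavesBelow x) : Γ (lca a b) ≤ Γ x :=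
    RTree.apply_lca_le_of_mem_leavesBelow hk.le hHST (fun v => (hleaf0 v).2) hlca1 hlca3 ha hb
  obtain ⟨z, hz⟩ := husafe (lca u v) (hlca1 u v)
  -- `lca` need not be symmetric, so the walk from `z` to `u`, to be reversed, is measured with
  -- the arguments of `lca` swapped
  obtain ⟨lu, hlu, hlu_len⟩ := RTree.exists_isAvoidingWalk_to_leaf (d := fun a b => Γ (lca b a))
    hk hHST hZ hbiclique (fun x a b ha hb => hdist x b a hb ha) hu_leaf
    ((hleaf0 u).2 hu_leaf).ge husafe (hlca1 u v) hz
  obtain ⟨lv, hlv, hlv_len⟩ := RTree.exists_isAvoidingWalk_to_leaf (d := fun a b => Γ (lca a b))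
    hk hHST hZ hbiclique hdist hv_leaf ((hleaf0 v).2 hv_leaf).ge hvsafe (hlca2 u v) hz
  have hwalk := hlu.reverse.append_tail hlv
  refine ⟨_, hwalk.ne_nil, hwalk.isChain, hwalk.not_mem, hwalk.head?, hwalk.getLast?, ?_⟩
  rw [pathLen_append_tail _ _ _ (hlu.reverse.getLast?.trans hlv.head?.symm), pathLen_reverse]
  calc _ ≤ k / (k - 1) * Γ (lca u v) + k / (k - 1) * Γ (lca u v) := add_le_add hlu_len hlv_len
    _ = (2 + 2 / (k - 1)) * Γ (lca u v) := by
      field_simp [(by linarith : (0 : ℝ) < k - 1).ne']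
      ring

/-- In the biclique spanner of a `k`-HST, any two safe leaves `u, v ∉ B` are
connected in `H \ B` by a path of length at most
`(2 + 2/(k−1))·d_T(u,v) = (2 + 2/(k−1))·Γ (lca u v)`. -/
theorem stmt_15 {V : Type*} [Fintype V] (T : RTree V) (k : ℝ) (hk : 1 < k)
    (Γ : V → ℝ) (lca : V → V → V)
    (hleaf0 : ∀ v, Γ v = 0 ↔ T.children v = ∅)
    (hHST : ∀ u v, T.parent u = some v → k * Γ u ≤ Γ v)
    (hlca1 : ∀ u v, T.ancestor (lca u v) u)
    (hlca2 : ∀ u v, T.ancestor (lca u v) v)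
    (hlca3 : ∀ u v w, T.ancestor w u → T.ancestor w v → T.ancestor w (lca u v))
    (Z : V → Finset V) (hZ : ∀ x, Z x ⊆ T.leavesBelow x)
    (H : SimpleGraph V)
    (hH : ∀ a b, H.Adj a b ↔ a ≠ b ∧ ∃ x y, T.parent y = some x ∧
      ((a ∈ Z x ∧ b ∈ Z y) ∨ (a ∈ Z y ∧ b ∈ Z x)))
    (B : Finset V)
    (u : V) (hu_leaf : T.children u = ∅) (huB : u ∉ B)
    (husafe : ∀ x, T.ancestor x u → (Z x \ B).Nonempty)
    (v : V) (hv_leaf : T.children v = ∅) (hvB : v ∉ B)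
    (hvsafe : ∀ x, T.ancestor x v → (Z x \ B).Nonempty) :
    ∃ l : List V, l ≠ [] ∧ l.Chain' H.Adj ∧ (∀ w ∈ l, w ∉ B) ∧
      l.head? = some u ∧ l.getLast? = some v ∧
      pathLen (fun a b => Γ (lca a b)) l ≤ (2 + 2 / (k - 1)) * Γ (lca u v) :=
  stmt_15_general T k hk Γ lca hleaf0 hHST hlca1 hlca2 hlca3 Z hZ H hH B u hu_leaf husafe v hv_leaf
    hvsafe
end

section
/- Let p ∈ (0,1], let each element of [n] be independently included in a set V' with probability p, and fix B ⊆ [n] and x ∉ B such that for every y ≥ x, |[x,y] ∩ B| ≤ α·|[x,y]| (x is not in the left α-shadow taken to the right). Then the probability that the first ℓ elements of V' to the right of x (if they exist) all lie in B is at most O(√ℓ)·α^{ℓ−1}. -/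
/-!
Split the failure event according to the position `y` of the `ℓ`-th point of `V'` after `x`;
for each `S` there is at most one such `y`. Given this position, `V' ∩ (x, y]` is a uniformly
random `ℓ`-subset of `(x, y]` containing `y`, so the conditional failure probability is
`C(b, ℓ - 1) / C(m, ℓ - 1) ≤ (b / m) ^ (ℓ - 1)` with `b = |(x, y) ∩ B|` and `m = |(x, y)|`.
Since `x ∉ B` and (unless the event is empty) `y ∈ B`, the shadow condition at `y` reads
`b + 1 ≤ α (m + 2)`, which gives `(b / m) ^ (ℓ - 1) ≤ e² α ^ (ℓ - 1)`.
-/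

open scoped Classical

/-- Probability of the outcome `S` when each element of `Fin n` is included
independently with probability `p`. -/
noncomputable def bernoulliWeight (n : ℕ) (p : ℝ) (S : Finset (Fin n)) : ℝ :=
  p ^ S.card * (1 - p) ^ (n - S.card)

/-- The event that `S` contains at least `ℓ` elements to the right of `x` and
the first `ℓ` of them (in increasing order) all lie in `B`. -/
def firstFail (n ℓ : ℕ) (x : Fin n) (B S : Finset (Fin n)) : Prop :=
  ℓ ≤ (S.filter (fun y => x < y)).card ∧
    ∀ y ∈ ((S.filter (fun y => x < y)).sort (· ≤ ·)).take ℓ, y ∈ B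

open Finset

theorem List.SortedLT.mem_take_succ_iff {α : Type*} [LinearOrder α] {l : List α}
    (hl : l.SortedLT) {k : ℕ} (hk : k < l.length) {z : α} :
    z ∈ l.take (k + 1) ↔ z ∈ l ∧ z ≤ l[k] := by
  simp only [List.mem_take_iff_getElem, lt_inf_iff, List.mem_iff_getElem (a := z) (l := l)]
  constructor
  · rintro ⟨i, ⟨hik, hi⟩, rfl⟩
    exact ⟨⟨i, hi, rfl⟩, hl.getElem_le_getElem_iff.2 (by omega)⟩
  · rintro ⟨⟨i, hi, rfl⟩, hle⟩
    exact ⟨i, ⟨by have := hl.getElem_le_getElem_iff.1 hle; omega, hi⟩, rfl⟩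

theorem Nat.descFactorial_mul_pow_le_pow_mul_descFactorial {b m : ℕ} (hbm : b ≤ m) (k : ℕ) :
    b.descFactorial k * m ^ k ≤ b ^ k * m.descFactorial k := by
  induction k with
  | zero => simp
  | succ k ih =>
    have hstep : (b - k) * m ≤ b * (m - k) := by
      rcases le_or_gt k b with hkb | hbk
      · rw [Nat.sub_mul, Nat.mul_sub]
        exact Nat.sub_le_sub_left (by rw [mul_comm k m]; exact Nat.mul_le_mul_right k hbm) _
      · simp [Nat.sub_eq_zero_of_le hbk.le]
    calc b.descFactorial (k + 1) * m ^ (k + 1)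
        = ((b - k) * m) * (b.descFactorial k * m ^ k) := by
          rw [Nat.descFactorial_succ, pow_succ]; ring
      _ ≤ (b * (m - k)) * (b ^ k * m.descFactorial k) := Nat.mul_le_mul hstep ih
      _ = b ^ (k + 1) * m.descFactorial (k + 1) := by
          rw [Nat.descFactorial_succ, pow_succ]; ring

theorem Nat.choose_mul_pow_le_pow_mul_choose {b m : ℕ} (hbm : b ≤ m) (k : ℕ) :
    b.choose k * m ^ k ≤ b ^ k * m.choose k := by
  have h := Nat.descFactorial_mul_pow_le_pow_mul_descFactorial hbm k
  rw [Nat.descFactorial_eq_factorial_mul_choose, Nat.descFactorial_eq_factorial_mul_choose,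
    mul_assoc, mul_left_comm (b ^ k)] at h
  exact Nat.le_of_mul_le_mul_left h k.factorial_pos

theorem Real.pow_le_exp_mul_pow_of_le_add_one {b t c : ℝ} {k : ℕ} (ht : 0 < t) (hb : 0 ≤ b)
    (hbt : b ≤ t + 1) (hk : k ≤ c * t) : b ^ k ≤ Real.exp c * t ^ k := by
  have hexp : t + 1 ≤ t * Real.exp t⁻¹ := by
    have h := mul_le_mul_of_nonneg_left (Real.add_one_le_exp t⁻¹) ht.le
    rwa [mul_add, mul_inv_cancel₀ ht.ne', mul_one, add_comm] at h
  calc b ^ k ≤ (t * Real.exp t⁻¹) ^ k := pow_le_pow_left₀ hb (hbt.trans hexp) k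
    _ = Real.exp (k * t⁻¹) * t ^ k := by rw [mul_pow, Real.exp_nat_mul, mul_comm]
    _ ≤ Real.exp c * t ^ k := by
      gcongr
      rwa [← div_eq_mul_inv, div_le_iff₀ ht]

theorem choose_le_exp_two_mul_pow_mul_choose {b m k : ℕ} {α : ℝ} (hα : α ≤ 1) (hbm : b ≤ m)
    (hshadow : (b : ℝ) + 1 ≤ α * (m + 2)) :
    (b.choose k : ℝ) ≤ Real.exp 2 * α ^ k * m.choose k := by
  rcases Nat.eq_zero_or_pos k with rfl | hk
  · simp [Real.one_le_exp zero_le_two]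
  rcases lt_or_ge b k with hbk | hkb
  · rw [Nat.choose_eq_zero_of_lt hbk, Nat.cast_zero]
    have hα : 0 < α := by nlinarith
    positivity
  -- `b ≤ α m + 1` and `k ≤ b ≤ 2 α m` give `b ^ k ≤ (α m) ^ k (1 + 1 / (α m)) ^ k ≤ e² (α m) ^ k`.
  have hm : (1 : ℝ) ≤ m := by exact_mod_cast hk.trans_le (hkb.trans hbm)
  have hα : 0 < α := by nlinarith
  have hpow : (b : ℝ) ^ k ≤ Real.exp 2 * (α * m) ^ k := by
    have hkb' : (k : ℝ) ≤ b := by exact_mod_cast hkb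
    exact Real.pow_le_exp_mul_pow_of_le_add_one (by positivity) (Nat.cast_nonneg b)
      (by nlinarith) (by nlinarith)
  have hcast : (b.choose k : ℝ) * m ^ k ≤ (b : ℝ) ^ k * m.choose k := by
    exact_mod_cast Nat.choose_mul_pow_le_pow_mul_choose hbm k
  refine le_of_mul_le_mul_right ?_ (by positivity : (0 : ℝ) < m ^ k)
  calc (b.choose k : ℝ) * m ^ k ≤ (b : ℝ) ^ k * m.choose k := hcast
    _ ≤ Real.exp 2 * (α * m) ^ k * m.choose k := by gcongr
    _ = Real.exp 2 * α ^ k * m.choose k * m ^ k := by ring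

namespace Finset

lemma sum_ite_le_sum_sum_ite {ι σ : Type*} (s : Finset σ) (t : Finset ι) {w : σ → ℝ}
    (hw : ∀ S ∈ s, 0 ≤ w S) {E : σ → Prop} {F : ι → σ → Prop} [DecidablePred E]
    [∀ i, DecidablePred (F i)]
    (hEF : ∀ S ∈ s, E S → ∃ i ∈ t, F i S) :
    ∑ S ∈ s, (if E S then w S else 0) ≤ ∑ i ∈ t, ∑ S ∈ s, (if F i S then w S else 0) := by
  have hterm : ∀ S ∈ s, ∀ i, 0 ≤ if F i S then w S else 0 := fun S hS i => by
    split_ifs <;> simp [hw S hS]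
  rw [sum_comm]
  refine sum_le_sum fun S hS => ?_
  split_ifs with hE
  · obtain ⟨i, hi, hFi⟩ := hEF S hS hE
    simpa [hFi] using single_le_sum (fun j _ => hterm S hS j) hi
  · exact sum_nonneg fun i _ => hterm S hS i

lemma sum_sum_ite_le_sum {ι σ : Type*} (s : Finset σ) (t : Finset ι) {w : σ → ℝ}
    (hw : ∀ S ∈ s, 0 ≤ w S) {F : ι → σ → Prop} [∀ i, DecidablePred (F i)]
    (hF : ∀ S ∈ s, ∀ i ∈ t, ∀ j ∈ t, F i S → F j S → i = j) :
    ∑ i ∈ t, ∑ S ∈ s, (if F i S then w S else 0) ≤ ∑ S ∈ s, w S := by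
  rw [sum_comm]
  refine sum_le_sum fun S hS => ?_
  rw [← sum_filter, sum_const, nsmul_eq_mul]
  have hcard : #{i ∈ t | F i S} ≤ 1 := card_le_one.2 fun i hi j hj =>
    hF S hS i (mem_filter.1 hi).1 j (mem_filter.1 hj).1 (mem_filter.1 hi).2 (mem_filter.1 hj).2
  exact mul_le_of_le_one_left (hw S hS) (by exact_mod_cast hcard)

lemma card_filter_mem_and_card_eq_succ {α : Type*} [DecidableEq α] {K : Finset α} {y : α}
    (hy : y ∈ K) (k : ℕ) :
    #{A ∈ K.powerset | y ∈ A ∧ #A = k + 1} = (#K - 1).choose k := by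
  rw [← card_erase_of_mem hy, ← card_powersetCard]
  refine card_nbij' (·.erase y) (insert y ·) (fun A hA => ?_) (fun A hA => ?_)
    (fun A hA => insert_erase (mem_filter.1 hA).2.1) (fun A hA => erase_insert ?_)
  · simp only [mem_coe, mem_filter, mem_powerset, mem_powersetCard] at hA ⊢
    exact ⟨erase_subset_erase y hA.1, by rw [card_erase_of_mem hA.2.1, hA.2.2, Nat.add_sub_cancel]⟩
  · simp only [mem_coe, mem_powersetCard] at hA
    simp only [mem_coe, mem_filter, mem_powerset]
    refine ⟨insert_subset hy (hA.1.trans (erase_subset y K)), mem_insert_self y A, ?_⟩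
    rw [card_insert_of_notMem fun h => notMem_erase y K (hA.1 h), hA.2]
  · exact fun h => notMem_erase y K ((mem_powersetCard.1 hA).1 h)

end Finset

section NthAfter

variable {α : Type*} [LinearOrder α] [LocallyFiniteOrder α]

def IsNthAfter (k : ℕ) (x y : α) (S : Finset α) : Prop :=
  x < y ∧ y ∈ S ∧ #(S ∩ Ioc x y) = k

lemma IsNthAfter.unique {k : ℕ} {x y z : α} {S : Finset α} (hy : IsNthAfter k x y S)
    (hz : IsNthAfter k x z S) : y = z := by
  wlog hyz : y < z generalizing y z
  · rcases (not_lt.1 hyz).lt_or_eq with h | h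
    · exact (this hz hy h).symm
    · exact h.symm
  have hssub : S ∩ Ioc x y ⊂ S ∩ Ioc x z := by
    refine ssubset_of_subset_of_ne (inter_subset_inter_left (Ioc_subset_Ioc_right hyz.le))
      fun h => ?_
    have hzmem : z ∈ S ∩ Ioc x z := mem_inter.2 ⟨hz.2.1, mem_Ioc.2 ⟨hz.1, le_rfl⟩⟩
    rw [← h] at hzmem
    exact absurd (mem_Ioc.1 (mem_inter.1 hzmem).2).2 hyz.not_ge
  exact absurd (hy.2.2.trans hz.2.2.symm) (card_lt_card hssub).ne

lemma isNthAfter_iff {k : ℕ} {x y : α} (hxy : x < y) (S : Finset α) :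
    IsNthAfter k x y S ↔ y ∈ S ∩ Ioc x y ∧ #(S ∩ Ioc x y) = k := by
  simp [IsNthAfter, hxy]

end NthAfter

lemma exists_isNthAfter_of_firstFail {n k : ℕ} {x : Fin n} {B S : Finset (Fin n)}
    (h : firstFail n (k + 1) x B S) :
    ∃ y, IsNthAfter (k + 1) x y S ∧ S ∩ Ioc x y ⊆ B := by
  set L := (S.filter (fun y => x < y)).sort (· ≤ ·)
  have hlen : k < L.length := by rw [length_sort]; exact h.1
  have hsorted : L.SortedLT := sortedLT_sort _
  have hprefix : S ∩ Ioc x L[k] = (L.take (k + 1)).toFinset := by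
    ext z
    rw [List.mem_toFinset, hsorted.mem_take_succ_iff hlen, mem_sort, mem_inter, mem_filter,
      mem_Ioc, and_assoc]
  have hy : L[k] ∈ S.filter (fun y => x < y) := (mem_sort _).1 (List.getElem_mem hlen)
  have hcard : #(S ∩ Ioc x L[k]) = k + 1 := by
    rw [hprefix, List.toFinset_card_of_nodup ((sort_nodup _ _).sublist (List.take_sublist _ _)),
      List.length_take, min_eq_left hlen]
  refine ⟨L[k], ⟨(mem_filter.1 hy).2, (mem_filter.1 hy).1, hcard⟩, ?_⟩
  rw [hprefix]
  exact fun z hz => h.2 z (List.mem_toFinset.1 hz)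

lemma card_subsets_Ioc_subset_le {α : Type*} [LinearOrder α] [LocallyFiniteOrder α]
    {x y : α} {B : Finset α} {a : ℝ} (k : ℕ) (ha : a ≤ 1) (hxB : x ∉ B) (hxy : x < y)
    (hshadow : (#(Icc x y ∩ B) : ℝ) ≤ a * #(Icc x y)) :
    (#{A ∈ (Ioc x y).powerset | y ∈ A ∧ #A = k + 1 ∧ A ⊆ B} : ℝ)
      ≤ Real.exp 2 * a ^ k * #{A ∈ (Ioc x y).powerset | y ∈ A ∧ #A = k + 1} := by
  have hyI : y ∈ Ioc x y := mem_Ioc.2 ⟨hxy, le_rfl⟩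
  rw [card_filter_mem_and_card_eq_succ hyI]
  by_cases hyB : y ∈ B
  · have hfilter : {A ∈ (Ioc x y).powerset | y ∈ A ∧ #A = k + 1 ∧ A ⊆ B}
        = {A ∈ (Ioc x y ∩ B).powerset | y ∈ A ∧ #A = k + 1} := by
      ext A
      simp only [mem_filter, mem_powerset, subset_inter_iff]
      tauto
    rw [hfilter, card_filter_mem_and_card_eq_succ (mem_inter.2 ⟨hyI, hyB⟩)]
    have hIcc : Icc x y = insert x (Ioc x y) := (Ioc_insert_left hxy.le).symm
    have hxI : x ∉ Ioc x y := by simp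
    have hIccB : Icc x y ∩ B = Ioc x y ∩ B := by rw [hIcc, insert_inter_of_notMem hxB]
    have hpos : 0 < #(Ioc x y ∩ B) := card_pos.2 ⟨y, mem_inter.2 ⟨hyI, hyB⟩⟩
    have hle : #(Ioc x y ∩ B) ≤ #(Ioc x y) := card_le_card inter_subset_left
    rw [hIccB, hIcc, card_insert_of_notMem hxI] at hshadow
    refine choose_le_exp_two_mul_pow_mul_choose ha (Nat.sub_le_sub_right hle 1) ?_
    push_cast [Nat.cast_sub hpos, Nat.cast_sub (hpos.trans_le hle)] at hshadow ⊢
    linarith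
  · have hfilter : {A ∈ (Ioc x y).powerset | y ∈ A ∧ #A = k + 1 ∧ A ⊆ B} = ∅ :=
      filter_eq_empty_iff.2 fun A _ hA => hyB (hA.2.2 hA.1)
    rw [hfilter, card_empty, Nat.cast_zero]
    have ha₀ : 0 ≤ a := nonneg_of_mul_nonneg_left ((Nat.cast_nonneg _).trans hshadow)
      (by exact_mod_cast card_pos.2 ⟨x, mem_Icc.2 ⟨le_rfl, hxy.le⟩⟩)
    positivity

section BernoulliWeight

variable {n : ℕ}

lemma bernoulliWeight_nonneg {p : ℝ} (hp₀ : 0 ≤ p) (hp₁ : p ≤ 1) (S : Finset (Fin n)) :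
    0 ≤ bernoulliWeight n p S := by
  unfold bernoulliWeight
  have : 0 ≤ 1 - p := by linarith
  positivity

lemma sum_bernoulliWeight (p : ℝ) : ∑ S, bernoulliWeight n p S = 1 := by
  simp [bernoulliWeight, Fin.sum_pow_mul_eq_add_pow]

lemma sum_bernoulliWeight_inter_eq (p : ℝ) {I A : Finset (Fin n)} (hAI : A ⊆ I) :
    ∑ S with S ∩ I = A, bernoulliWeight n p S = p ^ #A * (1 - p) ^ (#I - #A) := by
  have hfiber : ({S | S ∩ I = A} : Finset (Finset (Fin n))) = Iᶜ.powerset.image (A ∪ ·) := by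
    ext S
    simp only [mem_filter, mem_univ, true_and, mem_image, mem_powerset]
    constructor
    · rintro rfl
      refine ⟨S \ I, fun a => by simp +contextual, ?_⟩
      ext a; simp only [mem_union, mem_inter, mem_sdiff]; tauto
    · rintro ⟨U, hU, rfl⟩
      ext a
      have hUa := @hU a
      have hAa := @hAI a
      simp only [mem_compl, mem_inter, mem_union] at hUa ⊢
      tauto
  have hdisj : ∀ U ∈ Iᶜ.powerset, Disjoint A U := fun U hU =>
    disjoint_of_subset_right (mem_powerset.1 hU) (disjoint_compl_right_iff.2 hAI)
  rw [hfiber, sum_image fun U hU V hV h => by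
    rw [← union_sdiff_cancel_left (hdisj U hU), ← union_sdiff_cancel_left (hdisj V hV)]
    exact congrArg (· \ A) h]
  have hn : #I + #Iᶜ = n := by rw [card_add_card_compl, Fintype.card_fin]
  calc ∑ U ∈ Iᶜ.powerset, bernoulliWeight n p (A ∪ U)
      = ∑ U ∈ Iᶜ.powerset, p ^ #A * (1 - p) ^ (#I - #A) * (p ^ #U * (1 - p) ^ (#Iᶜ - #U)) := by
        refine sum_congr rfl fun U hU => ?_
        have hA := card_le_card hAI
        have hU' := card_le_card (mem_powerset.1 hU)
        rw [bernoulliWeight, card_union_of_disjoint (hdisj U hU),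
          show n - (#A + #U) = (#I - #A) + (#Iᶜ - #U) by omega]
        ring
    _ = p ^ #A * (1 - p) ^ (#I - #A) := by
        rw [← mul_sum, sum_pow_mul_eq_add_pow, add_sub_cancel, one_pow, mul_one]

lemma sum_ite_inter_eq_sum_powerset (p : ℝ) (I : Finset (Fin n)) (Q : Finset (Fin n) → Prop)
    [DecidablePred Q] :
    ∑ S, (if Q (S ∩ I) then bernoulliWeight n p S else 0)
      = ∑ A ∈ I.powerset with Q A, p ^ #A * (1 - p) ^ (#I - #A) := by
  rw [← sum_fiberwise_of_maps_to (g := (· ∩ I)) (t := I.powerset)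
    (fun S _ => mem_powerset.2 inter_subset_right), sum_filter]
  refine sum_congr rfl fun A hA => ?_
  rw [sum_congr rfl fun S hS => by rw [(mem_filter.1 hS).2], sum_ite_irrel, sum_const_zero,
    sum_bernoulliWeight_inter_eq p (mem_powerset.1 hA)]

lemma sum_ite_inter_eq_card_mul (p : ℝ) (I : Finset (Fin n)) {Q : Finset (Fin n) → Prop}
    [DecidablePred Q] {j : ℕ} (hQ : ∀ A, Q A → #A = j) :
    ∑ S, (if Q (S ∩ I) then bernoulliWeight n p S else 0)
      = #{A ∈ I.powerset | Q A} * (p ^ j * (1 - p) ^ (#I - j)) := by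
  rw [sum_ite_inter_eq_sum_powerset, ← nsmul_eq_mul, ← sum_const]
  exact sum_congr rfl fun A hA => by rw [hQ A (mem_filter.1 hA).2]

end BernoulliWeight

lemma sum_isNthAfter_subset_le {n k : ℕ} {p a : ℝ} {x y : Fin n} {B : Finset (Fin n)}
    (hp₀ : 0 ≤ p) (hp₁ : p ≤ 1) (ha : a ≤ 1) (hxB : x ∉ B) (hxy : x < y)
    (hshadow : (#(Icc x y ∩ B) : ℝ) ≤ a * #(Icc x y)) :
    ∑ S, (if IsNthAfter (k + 1) x y S ∧ S ∩ Ioc x y ⊆ B then bernoulliWeight n p S else 0)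
      ≤ Real.exp 2 * a ^ k *
        ∑ S, (if IsNthAfter (k + 1) x y S then bernoulliWeight n p S else 0) := by
  rw [sum_congr rfl fun S _ => if_congr (by rw [isNthAfter_iff hxy, and_assoc]) rfl rfl,
    sum_congr rfl fun S _ => if_congr (isNthAfter_iff hxy S) rfl rfl,
    sum_ite_inter_eq_card_mul p _ (Q := fun A => y ∈ A ∧ #A = k + 1 ∧ A ⊆ B) fun A h => h.2.1,
    sum_ite_inter_eq_card_mul p _ (Q := fun A => y ∈ A ∧ #A = k + 1) fun A h => h.2,
    ← mul_assoc (Real.exp 2 * a ^ k)]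
  have : 0 ≤ 1 - p := by linarith
  exact mul_le_mul_of_nonneg_right (card_subsets_Ioc_subset_le k ha hxB hxy hshadow) (by positivity)

/-- If `x ∉ B` is outside the (rightward) `α`-shadow of `B`, then the
probability that the first `ℓ` elements of the random set to the right of `x`
all lie in `B` is at most `O(√ℓ)·α^(ℓ−1)`. -/
theorem stmt_16 :
    ∃ C : ℝ, 0 < C ∧ ∀ (n ℓ : ℕ) (p α : ℝ) (x : Fin n) (B : Finset (Fin n)),
      0 < p → p ≤ 1 → 0 < α → α ≤ 1 → 1 ≤ ℓ → x ∉ B →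
      (∀ y : Fin n, x ≤ y →
        ((Finset.Icc x y ∩ B).card : ℝ) ≤ α * ((Finset.Icc x y).card : ℝ)) →
      (∑ S : Finset (Fin n), if firstFail n ℓ x B S then bernoulliWeight n p S else 0)
        ≤ C * Real.sqrt ℓ * α ^ (ℓ - 1) := by
  refine ⟨Real.exp 2, Real.exp_pos 2, fun n ℓ p α x B hp₀ hp₁ _ hα₁ hℓ hxB hshadow => ?_⟩
  obtain ⟨k, rfl⟩ := Nat.exists_eq_add_of_le' hℓ
  have hw : ∀ S ∈ (univ : Finset (Finset (Fin n))), 0 ≤ bernoulliWeight n p S :=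
    fun S _ => bernoulliWeight_nonneg hp₀.le hp₁ S
  have hsqrt : 1 ≤ Real.sqrt (k + 1 : ℕ) := Real.one_le_sqrt.2 (by simp)
  calc (∑ S, if firstFail n (k + 1) x B S then bernoulliWeight n p S else 0)
      ≤ ∑ y ∈ Ioi x, ∑ S,
          (if IsNthAfter (k + 1) x y S ∧ S ∩ Ioc x y ⊆ B then bernoulliWeight n p S else 0) :=
        sum_ite_le_sum_sum_ite _ _ hw fun S _ hS => by
          obtain ⟨y, hy⟩ := exists_isNthAfter_of_firstFail hS
          exact ⟨y, mem_Ioi.2 hy.1.1, hy⟩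
    _ ≤ ∑ y ∈ Ioi x, Real.exp 2 * α ^ k *
          ∑ S, (if IsNthAfter (k + 1) x y S then bernoulliWeight n p S else 0) :=
        sum_le_sum fun y hy => sum_isNthAfter_subset_le hp₀.le hp₁ hα₁ hxB (mem_Ioi.1 hy)
          (hshadow y (mem_Ioi.1 hy).le)
    _ ≤ Real.exp 2 * α ^ k * ∑ S, bernoulliWeight n p S := by
        rw [← mul_sum]
        gcongr
        exact sum_sum_ite_le_sum _ _ hw fun S _ y _ z _ hy hz => hy.unique hz
    _ ≤ Real.exp 2 * Real.sqrt (k + 1 : ℕ) * α ^ (k + 1 - 1) := by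
        rw [sum_bernoulliWeight, mul_one, Nat.add_sub_cancel, mul_right_comm]
        exact le_mul_of_one_le_right (by positivity) hsqrt
end

section
/- Let L = (v_1, …, v_s) and suppose each v_i is independently included in a random set Z with probability p_i = min{1, c·ln n/(i·ν)} for parameters c ≥ 12, ν ∈ (0,1), n ≥ 2. Fix j ≤ s and B ⊆ L with {v_1,…,v_{⌊αj⌋}} ⊆ B for some α ≤ 1 − ν, and suppose p_{⌊αj⌋+1} < 1. Then Pr[Z ∩ {v_{⌊αj⌋+1}, …, v_j} = ∅] ≤ n^{−(c/(2ν))·ln(1/α)} ≤ n^{−3}. -/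
open scoped Classical

/-- Inclusion probability of the `i`-th element: `p_i = min{1, c·ln n/(i·ν)}`. -/
noncomputable def pIncl (c ν : ℝ) (n : ℕ) (i : ℕ) : ℝ :=
  min 1 (c * Real.log n / ((i : ℝ) * ν))

/-- Probability of the outcome `S ⊆ [1..s]` when element `i` is included
independently with probability `pIncl c ν n i`. -/
noncomputable def inclWeight (c ν : ℝ) (n s : ℕ) (S : Finset ℕ) : ℝ :=
  (∏ i ∈ S, pIncl c ν n i) * ∏ i ∈ Finset.Icc 1 s \ S, (1 - pIncl c ν n i)

/-! The probability of avoiding `T = {⌊αj⌋+1, …, j}` is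
`∏_{i ∈ T} (1 - p_i) ≤ exp (-∑_{i ∈ T} p_i)`.
Since `p_{⌊αj⌋+1} < 1`, every `p_i` with `i ∈ T` equals `c ln n/(iν)`, so the exponent is
`c ln n/ν` times a tail of the harmonic series. Telescoping `ln (i+1) - ln i ≤ 1/i` bounds that
tail below by `ln ((j+1)/(⌊αj⌋+1)) ≥ ½ ln (1/α)`, where the last step is `αj + 1 ≤ √α (j+1)`,
valid because `p_{⌊αj⌋+1} < 1` forces `αj ≥ 1`. Finally `ln (1/α) ≥ 1 - α ≥ ν`, so the exponent
`(c/(2ν)) ln (1/α)` is at least `c/2 ≥ 3`. -/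

open Finset Real

theorem sum_powerset_avoiding_eq_prod_one_sub {ι R : Type*} [DecidableEq ι] [CommRing R]
    (p : ι → R) {Ω T : Finset ι} (hT : T ⊆ Ω) :
    (∑ S ∈ Ω.powerset,
        if S ∩ T = ∅ then (∏ i ∈ S, p i) * ∏ i ∈ Ω \ S, (1 - p i) else 0)
      = ∏ i ∈ T, (1 - p i) := by
  -- `f` kills the factors indexed by `T`, so expanding `∏ (f i + (1 - p i))` leaves exactly the
  -- outcomes avoiding `T`.
  set f : ι → R := fun i ↦ if i ∈ T then 0 else p i
  have hf : ∀ S : Finset ι, ∏ i ∈ S, f i = if S ∩ T = ∅ then ∏ i ∈ S, p i else 0 := by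
    intro S
    split_ifs with hST
    · refine prod_congr rfl fun i hi ↦ if_neg fun hiT ↦ ?_
      simpa [hST] using mem_inter.2 ⟨hi, hiT⟩
    · obtain ⟨i, hi⟩ := nonempty_iff_ne_empty.2 hST
      exact prod_eq_zero (mem_inter.1 hi).1 (if_pos (mem_inter.1 hi).2)
  calc _ = ∏ i ∈ Ω, (f i + (1 - p i)) := by
        rw [prod_add]
        refine sum_congr rfl fun S _ ↦ ?_
        rw [hf]; split_ifs <;> simp
    _ = ∏ i ∈ T, (1 - p i) := by
        rw [← inter_eq_right.2 hT, ← prod_ite_mem]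
        refine prod_congr rfl fun i _ ↦ ?_
        by_cases hi : i ∈ T <;> simp [f, hi]

theorem prod_one_sub_le_exp_neg_sum {ι : Type*} (s : Finset ι) {p : ι → ℝ}
    (hp : ∀ i ∈ s, p i ≤ 1) : ∏ i ∈ s, (1 - p i) ≤ exp (-∑ i ∈ s, p i) := by
  rw [← sum_neg_distrib, exp_sum]
  exact prod_le_prod (fun i hi ↦ sub_nonneg.2 (hp i hi)) fun i _ ↦ one_sub_le_exp_neg _

theorem log_succ_sub_log_le_inv {x : ℝ} (hx : 0 < x) : log (x + 1) - log x ≤ x⁻¹ := by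
  rw [← log_div (by positivity) hx.ne']
  calc log ((x + 1) / x) ≤ (x + 1) / x - 1 := log_le_sub_one_of_pos (by positivity)
    _ = x⁻¹ := by field_simp; ring

theorem log_sub_log_le_sum_Icc_inv {a b : ℕ} (ha : 0 < a) (hab : a ≤ b) :
    log (b + 1) - log a ≤ ∑ i ∈ Icc a b, (i : ℝ)⁻¹ := by
  have := sum_Icc_sub hab fun i : ℕ ↦ log (i : ℝ)
  push_cast at this
  rw [← this]
  exact sum_le_sum fun i hi ↦
    log_succ_sub_log_le_inv (Nat.cast_pos.2 (ha.trans_le (mem_Icc.1 hi).1))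

theorem add_one_le_sqrt_mul_add_one {α x : ℝ} (hα0 : 0 ≤ α) (hα1 : α ≤ 1) (hx : 1 ≤ α * x) :
    α * x + 1 ≤ √α * (x + 1) := by
  have hs1 : √α ≤ 1 := sqrt_le_one.2 hα1
  have hx0 : 0 ≤ x := by nlinarith
  have hαx : √α * (√α * x) = α * x := by rw [← mul_assoc, mul_self_sqrt hα0]
  have hsx : 1 ≤ √α * x := by nlinarith [mul_nonneg (sqrt_nonneg α) hx0]
  nlinarith [mul_nonneg (sub_nonneg.2 hs1) (sub_nonneg.2 hsx)]

theorem le_log_inv_of_le_one_sub {α ν : ℝ} (hα0 : 0 < α) (hα : α ≤ 1 - ν) : ν ≤ log α⁻¹ := by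
  rw [log_inv]; linarith [log_le_sub_one_of_pos hα0]

theorem half_log_inv_le_sum_Icc_floor_inv {α : ℝ} {j : ℕ} (hα0 : 0 < α) (hα1 : α < 1)
    (hm : 1 ≤ ⌊α * j⌋₊) : log α⁻¹ / 2 ≤ ∑ i ∈ Icc (⌊α * j⌋₊ + 1) j, (i : ℝ)⁻¹ := by
  set m := ⌊α * j⌋₊
  have hmαj : (m : ℝ) ≤ α * j := Nat.floor_le (by positivity)
  have hαj : 1 ≤ α * j := le_trans (by exact_mod_cast hm) hmαj
  have hmj : m + 1 ≤ j := by
    have : (m : ℝ) < j := by nlinarith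
    exact_mod_cast this
  have hsqrt : (m : ℝ) + 1 ≤ √α * (j + 1) :=
    (add_le_add_left hmαj 1).trans (add_one_le_sqrt_mul_add_one hα0.le hα1.le hαj)
  have hlog : log ((m : ℝ) + 1) ≤ log α / 2 + log (j + 1) := by
    rw [← log_sqrt hα0.le, ← log_mul (by positivity) (by positivity)]
    exact log_le_log (by positivity) hsqrt
  have := log_sub_log_le_sum_Icc_inv (Nat.succ_pos m) hmj
  push_cast at this
  rw [log_inv]
  linarith

theorem pIncl_eq_of_le {c ν : ℝ} {n k i : ℕ} (hν : 0 < ν) (hcn : 0 ≤ c * log n)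
    (hk : c * log n < k * ν) (hki : k ≤ i) : pIncl c ν n i = c * log n / ν * (i : ℝ)⁻¹ := by
  have hiν : (k : ℝ) * ν ≤ i * ν := by gcongr
  rw [pIncl, min_eq_right ((div_lt_one (by linarith)).2 (by linarith)).le]
  field_simp

theorem stmt_18_general (c ν α : ℝ) (n s j : ℕ)
    (hc : 12 ≤ c) (hν0 : 0 < ν) (hn : 2 ≤ n)
    (hα0 : 0 < α) (hα : α ≤ 1 - ν) (hj : j ≤ s)
    (hp : c * Real.log n / ((⌊α * (j : ℝ)⌋₊ + 1 : ℕ) * ν) < 1) :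
    (∑ S ∈ (Finset.Icc 1 s).powerset,
        if S ∩ Finset.Icc (⌊α * (j : ℝ)⌋₊ + 1) j = ∅ then inclWeight c ν n s S else 0)
      ≤ (n : ℝ) ^ (-(c / (2 * ν)) * Real.log (1 / α)) ∧
    (n : ℝ) ^ (-(c / (2 * ν)) * Real.log (1 / α)) ≤ (n : ℝ) ^ (-3 : ℝ) := by
  set m := ⌊α * (j : ℝ)⌋₊
  set T := Icc (m + 1) j
  have hn1 : (1 : ℝ) < n := by exact_mod_cast hn
  have hcn : 1 < c * log n := by
    have : log 2 ≤ log n := log_le_log (by norm_num) (by exact_mod_cast hn)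
    nlinarith [log_two_gt_d9]
  have hpm : c * log n < (m + 1 : ℕ) * ν := (div_lt_one (by positivity)).1 hp
  have hm : 1 ≤ m := by
    by_contra! h
    simp only [Nat.lt_one_iff.1 h, zero_add, Nat.cast_one, one_mul] at hpm
    linarith
  have hsum : c / (2 * ν) * log α⁻¹ * log n ≤ ∑ i ∈ T, pIncl c ν n i := by
    rw [sum_congr rfl fun i hi ↦ pIncl_eq_of_le hν0 (by linarith) hpm (mem_Icc.1 hi).1, ← mul_sum]
    calc _ = c * log n / ν * (log α⁻¹ / 2) := by ring
      _ ≤ _ := by gcongr; exact half_log_inv_le_sum_Icc_floor_inv hα0 (by linarith) hm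
  have hνlog := le_log_inv_of_le_one_sub hα0 hα
  rw [one_div]
  constructor
  · calc _ = ∏ i ∈ T, (1 - pIncl c ν n i) :=
          sum_powerset_avoiding_eq_prod_one_sub _ fun i hi ↦ by
            simp only [T, mem_Icc] at hi ⊢; omega
      _ ≤ exp (-∑ i ∈ T, pIncl c ν n i) :=
          prod_one_sub_le_exp_neg_sum _ fun i _ ↦ min_le_left _ _
      _ ≤ exp (log n * (-(c / (2 * ν)) * log α⁻¹)) := by
          gcongr; linear_combination hsum
      _ = _ := (rpow_def_of_pos (by positivity) _).symm
  · rw [rpow_le_rpow_left_iff hn1, neg_mul, neg_le_neg_iff, div_mul_eq_mul_div,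
      le_div_iff₀ (by positivity)]
    nlinarith

/-- If each `v_i` (`1 ≤ i ≤ s`) is sampled with probability `min{1, c·ln n/(i·ν)}`,
`{v_1,…,v_⌊αj⌋} ⊆ B` with `α ≤ 1 − ν`, and `p_{⌊αj⌋+1} < 1`, then
`Pr[Z ∩ {v_{⌊αj⌋+1},…,v_j} = ∅] ≤ n^(−(c/(2ν))·ln(1/α)) ≤ n^(−3)`. -/
theorem stmt_18 (c ν α : ℝ) (n s j : ℕ) (B : Finset ℕ)
    (hc : 12 ≤ c) (hν0 : 0 < ν) (hν1 : ν < 1) (hn : 2 ≤ n)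
    (hα0 : 0 < α) (hα : α ≤ 1 - ν) (hj : j ≤ s)
    (hB1 : Finset.Icc 1 ⌊α * (j : ℝ)⌋₊ ⊆ B) (hB2 : B ⊆ Finset.Icc 1 s)
    (hp : c * Real.log n / ((⌊α * (j : ℝ)⌋₊ + 1 : ℕ) * ν) < 1) :
    (∑ S ∈ (Finset.Icc 1 s).powerset,
        if S ∩ Finset.Icc (⌊α * (j : ℝ)⌋₊ + 1) j = ∅ then inclWeight c ν n s S else 0)
      ≤ (n : ℝ) ^ (-(c / (2 * ν)) * Real.log (1 / α)) ∧
    (n : ℝ) ^ (-(c / (2 * ν)) * Real.log (1 / α)) ≤ (n : ℝ) ^ (-3 : ℝ) :=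
  stmt_18_general c ν α n s j hc hν0 hn hα0 hα hj hp
end
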